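/- arXiv:2311.10085 — 9 statements merged into one kernel-verified Lean document; each statement's English description precedes it below -/
import Mathlib

section
/- The LogDet matrix divergence is invariant under congruence by invertible matrices: for all positive definite matrices X, Y of size n and any invertible matrix A, D_ld(AᵀXA, AᵀYA) = D_ld(X, Y). -/
open Matrix

/-- The LogDet matrix divergence: D_ld(X,Y) = -log det(XY⁻¹) + Tr(XY⁻¹) - n. -/
noncomputable def logDetDiv {n : ℕ} (X Y : Matrix (Fin n) (Fin n) ℝ) : ℝ :=
  -Real.log ((X * Y⁻¹).det) + (X * Y⁻¹).trace - n

theorem logDetDiv_congruence_invariant {n : ℕ}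
    (X Y A : Matrix (Fin n) (Fin n) ℝ)
    (hX : X.PosDef) (hY : Y.PosDef) (hA : IsUnit A.det) :
    logDetDiv (Aᵀ * X * A) (Aᵀ * Y * A) = logDetDiv X Y := by
  have hAT : IsUnit Aᵀ.det := by rwa [Matrix.det_transpose]
  have key : (Aᵀ * X * A) * (Aᵀ * Y * A)⁻¹ = Aᵀ * (X * Y⁻¹) * Aᵀ⁻¹ := by
    rw [Matrix.mul_inv_rev, Matrix.mul_inv_rev]
    calc Aᵀ * X * A * (A⁻¹ * (Y⁻¹ * Aᵀ⁻¹))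
        = Aᵀ * X * (A * A⁻¹) * (Y⁻¹ * Aᵀ⁻¹) := by
          simp only [Matrix.mul_assoc]
      _ = Aᵀ * (X * Y⁻¹) * Aᵀ⁻¹ := by
          rw [Matrix.mul_nonsing_inv A hA, Matrix.mul_one]
          simp only [Matrix.mul_assoc]
  unfold logDetDiv
  rw [key, Matrix.det_conj ((Matrix.isUnit_iff_isUnit_det Aᵀ).mpr hAT), Matrix.trace_mul_cycle,
    Matrix.nonsing_inv_mul Aᵀ hAT, Matrix.one_mul]
end

section
/- Let X = VΣVᵀ and Y = UΘUᵀ be eigendecompositions of positive definite matrices X and Y with orthonormal eigenvector matrices V, U and eigenvalues σ_i, θ_j. Then D_ld(X,Y) = Σ_i Σ_j (v_iᵀu_j)² (σ_i/θ_j - log(σ_i/θ_j) - 1). -/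
/-!
With `W = Vᵀ U`, one has `det (X Y⁻¹) = ∏ σᵢ / ∏ θⱼ` and `Tr (X Y⁻¹) = ∑ᵢⱼ Wᵢⱼ² σᵢ / θⱼ`.
Since `W` is orthogonal, the matrix of squares `(Wᵢⱼ²)` is doubly stochastic, so the terms
`log σᵢ`, `log θⱼ` and `1` of the right-hand side can be spread over all pairs `(i, j)` with
weights `Wᵢⱼ²` without changing their sums.
-/

open Matrix

open Finset

namespace Matrix

variable {m k l R : Type*} [Fintype m] [Fintype k] [Fintype l]

theorem det_mul_mul_transpose_of_mul_transpose_eq_one [DecidableEq m] [CommRing R]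
    {U : Matrix m m R} (hU : U * Uᵀ = 1) (A : Matrix m m R) : (U * A * Uᵀ).det = A.det := by
  rw [← inv_eq_right_inv hU,
    det_conj ((isUnit_iff_isUnit_det U).mpr (isUnit_det_of_right_inverse hU))]

theorem inv_mul_diagonal_mul_transpose_of_mul_transpose_eq_one [DecidableEq m] {K : Type*}
    [Field K] {U : Matrix m m K} (hU : U * Uᵀ = 1) {d : m → K} (hd : ∀ i, d i ≠ 0) :
    (U * diagonal d * Uᵀ)⁻¹ = U * diagonal d⁻¹ * Uᵀ := by
  have hdd : diagonal d * diagonal d⁻¹ = 1 := by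
    rw [diagonal_mul_diagonal, ← diagonal_one]
    exact congrArg diagonal (funext fun i => mul_inv_cancel₀ (hd i))
  apply inv_eq_right_inv
  calc U * diagonal d * Uᵀ * (U * diagonal d⁻¹ * Uᵀ)
      = U * (diagonal d * (Uᵀ * U) * diagonal d⁻¹) * Uᵀ := by simp only [Matrix.mul_assoc]
    _ = 1 := by rw [mul_eq_one_comm.mp hU, Matrix.mul_one, hdd, Matrix.mul_one, hU]

theorem trace_mul_mul_transpose_mul_mul_mul_transpose [CommSemiring R] (V : Matrix m k R)
    (U : Matrix m l R) (A : Matrix k k R) (B : Matrix l l R) :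
    trace (V * A * Vᵀ * (U * B * Uᵀ)) = trace (A * (Vᵀ * U) * B * (Vᵀ * U)ᵀ) := by
  calc trace (V * A * Vᵀ * (U * B * Uᵀ))
      = trace (V * (A * Vᵀ * U * B * Uᵀ)) := by simp only [Matrix.mul_assoc]
    _ = trace (A * Vᵀ * U * B * Uᵀ * V) := trace_mul_comm _ _
    _ = trace (A * (Vᵀ * U) * B * (Vᵀ * U)ᵀ) := by
      simp only [transpose_mul, transpose_transpose, Matrix.mul_assoc]

theorem trace_diagonal_mul_mul_diagonal_mul_transpose [CommSemiring R] [DecidableEq k]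
    [DecidableEq l] (W : Matrix k l R) (a : k → R) (b : l → R) :
    trace (diagonal a * W * diagonal b * Wᵀ) = ∑ i, ∑ j, W i j ^ 2 * (a i * b j) := by
  refine sum_congr rfl fun i _ => ?_
  simp only [diag_apply, mul_apply (M := diagonal a * W * diagonal b), mul_diagonal,
    diagonal_mul, transpose_apply]
  exact sum_congr rfl fun j _ => by ring

theorem map_sq_mem_doublyStochastic_of_mul_transpose_eq_one [DecidableEq m] [CommRing R]
    [LinearOrder R] [IsStrictOrderedRing R] {W : Matrix m m R} (hW : W * Wᵀ = 1) :
    W.map (· ^ 2) ∈ doublyStochastic R m := by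
  have hWt : Wᵀ * W = 1 := mul_eq_one_comm.mp hW
  refine mem_doublyStochastic_iff_sum.mpr ⟨fun i j => sq_nonneg _, fun i => ?_, fun j => ?_⟩
  · simpa [mul_apply, one_apply, sq] using congrFun (congrFun hW i) i
  · simpa [mul_apply, one_apply, sq] using congrFun (congrFun hWt j) j

theorem sum_sum_mul_add_of_mem_doublyStochastic [DecidableEq m] [CommSemiring R]
    [PartialOrder R] [IsOrderedRing R] {M : Matrix m m R} (hM : M ∈ doublyStochastic R m)
    (a b : m → R) :
    ∑ i, ∑ j, M i j * (a i + b j) = ∑ i, a i + ∑ j, b j := by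
  simp only [mul_add, sum_add_distrib]
  rw [sum_comm (f := fun i j => M i j * b j)]
  simp only [← sum_mul, sum_row_of_mem_doublyStochastic hM,
    sum_col_of_mem_doublyStochastic hM, one_mul]

end Matrix

theorem logDetDiv_mul_diagonal_mul_transpose {n : ℕ} {V U : Matrix (Fin n) (Fin n) ℝ}
    {σ θ : Fin n → ℝ} (hV : V * Vᵀ = 1) (hU : U * Uᵀ = 1) (hσ : ∀ i, 0 < σ i)
    (hθ : ∀ j, 0 < θ j) :
    logDetDiv (V * diagonal σ * Vᵀ) (U * diagonal θ * Uᵀ) =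
      ∑ i, ∑ j, (Vᵀ * U) i j ^ 2 * (σ i * (θ j)⁻¹) - ∑ i, Real.log (σ i) +
        ∑ j, Real.log (θ j) - n := by
  have hσ0 : ∀ i, σ i ≠ 0 := fun i => (hσ i).ne'
  have hθ0 : ∀ j, θ j ≠ 0 := fun j => (hθ j).ne'
  have hlogDet : Real.log ((∏ i, σ i) * ∏ j, (θ j)⁻¹) =
      ∑ i, Real.log (σ i) - ∑ j, Real.log (θ j) := by
    rw [Real.log_mul (prod_ne_zero_iff.mpr fun i _ => hσ0 i)
        (prod_ne_zero_iff.mpr fun j _ => inv_ne_zero (hθ0 j)),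
      Real.log_prod (fun i _ => hσ0 i), Real.log_prod (fun j _ => inv_ne_zero (hθ0 j))]
    simp [Real.log_inv, sub_eq_add_neg]
  rw [logDetDiv, inv_mul_diagonal_mul_transpose_of_mul_transpose_eq_one hU hθ0, det_mul,
    det_mul_mul_transpose_of_mul_transpose_eq_one hV,
    det_mul_mul_transpose_of_mul_transpose_eq_one hU, det_diagonal, det_diagonal,
    trace_mul_mul_transpose_mul_mul_mul_transpose,
    trace_diagonal_mul_mul_diagonal_mul_transpose]
  simp only [Pi.inv_apply, hlogDet]
  ring

theorem logDetDiv_eigendecomposition {n : ℕ}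
    (V U : Matrix (Fin n) (Fin n) ℝ) (σ θ : Fin n → ℝ)
    (hV : V * Vᵀ = 1) (hU : U * Uᵀ = 1)
    (hσ : ∀ i, 0 < σ i) (hθ : ∀ j, 0 < θ j) :
    logDetDiv (V * Matrix.diagonal σ * Vᵀ) (U * Matrix.diagonal θ * Uᵀ) =
      ∑ i, ∑ j, ((Vᵀ * U) i j) ^ 2 *
        (σ i / θ j - Real.log (σ i / θ j) - 1) := by
  have hW : Vᵀ * U * (Vᵀ * U)ᵀ = 1 := by
    rw [transpose_mul, transpose_transpose, Matrix.mul_assoc, ← Matrix.mul_assoc U, hU,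
      Matrix.one_mul, mul_eq_one_comm.mp hV]
  have hweights := sum_sum_mul_add_of_mem_doublyStochastic
    (map_sq_mem_doublyStochastic_of_mul_transpose_eq_one hW)
    (fun i => -Real.log (σ i) - 1) (fun j => Real.log (θ j))
  simp only [map_apply] at hweights
  have hsplit : ∀ i j, σ i * (θ j)⁻¹ + ((-Real.log (σ i) - 1) + Real.log (θ j)) =
      σ i / θ j - Real.log (σ i / θ j) - 1 := fun i j => by
    rw [Real.log_div (hσ i).ne' (hθ j).ne']
    ring
  calc logDetDiv (V * diagonal σ * Vᵀ) (U * diagonal θ * Uᵀ)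
      = ∑ i, ∑ j, (Vᵀ * U) i j ^ 2 * (σ i * (θ j)⁻¹) - ∑ i, Real.log (σ i) +
          ∑ j, Real.log (θ j) - n := logDetDiv_mul_diagonal_mul_transpose hV hU hσ hθ
    _ = ∑ i, ∑ j, (Vᵀ * U) i j ^ 2 * (σ i * (θ j)⁻¹) +
          (∑ i, (-Real.log (σ i) - 1) + ∑ j, Real.log (θ j)) := by
      simp only [sum_sub_distrib, sum_neg_distrib, sum_const, card_univ, Fintype.card_fin,
        nsmul_eq_mul, mul_one]
      ring
    _ = ∑ i, ∑ j, (Vᵀ * U) i j ^ 2 * (σ i * (θ j)⁻¹) +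
          ∑ i, ∑ j, (Vᵀ * U) i j ^ 2 * ((-Real.log (σ i) - 1) + Real.log (θ j)) := by
      rw [hweights]
    _ = ∑ i, ∑ j, (Vᵀ * U) i j ^ 2 * (σ i / θ j - Real.log (σ i / θ j) - 1) := by
      simp only [← sum_add_distrib, ← mul_add, hsplit]
end

section
/- The minimizer of the Lagrangian L(X) = Tr(X g gᵀ) + λ(-log det(X X_{prev}⁻¹) + Tr(X X_{prev}⁻¹) - n) over positive definite X satisfies X⁻¹ = X_{prev}⁻¹ + g gᵀ/λ. -/
/-!
Completing the square in the trace term, `L Y = λ (tr (Y M) - log det Y) + const` with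
`M = Xprev⁻¹ + λ⁻¹ g gᵀ` positive definite. Writing `M = Bᴴ B` and `A = B Y Bᴴ`, one has
`tr (Y M) - log det Y = tr A - log det A + log det M`, and `tr A - log det A = ∑ (μᵢ - log μᵢ)`
over the eigenvalues of `A`. Since `μ - log μ ≥ 1` with equality only at `μ = 1`, the unique
minimizer is `A = 1`, that is `Y = M⁻¹`.
-/

open Matrix

namespace Matrix

variable {ι 𝕜 : Type*} [Fintype ι] [DecidableEq ι] [RCLike 𝕜]

theorem IsHermitian.eq_one_of_eigenvalues_eq_one {A : Matrix ι ι 𝕜} (hA : A.IsHermitian)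
    (h : ∀ i, hA.eigenvalues i = 1) : A = 1 := by
  have hdiag : diagonal (RCLike.ofReal ∘ hA.eigenvalues) = (1 : Matrix ι ι 𝕜) := by
    rw [← diagonal_one]
    congr 1
    ext i
    simp [h i]
  conv_lhs => rw [hA.spectral_theorem]
  rw [hdiag, map_one]

theorem PosDef.eq_one_of_trace_sub_log_det_le {A : Matrix ι ι ℝ} (hA : A.PosDef)
    (h : A.trace - Real.log A.det ≤ Fintype.card ι) : A = 1 := by
  set μ := hA.1.eigenvalues
  have hμ : ∀ i, 0 < μ i := hA.eigenvalues_pos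
  refine hA.1.eq_one_of_eigenvalues_eq_one fun i => ?_
  by_contra hi
  have hgap : ∀ j, 0 ≤ μ j - Real.log (μ j) - 1 := fun j => by
    linarith [Real.log_le_sub_one_of_pos (hμ j)]
  have hpos : 0 < ∑ j, (μ j - Real.log (μ j) - 1) :=
    Finset.sum_pos' (fun j _ => hgap j)
      ⟨i, Finset.mem_univ i, by linarith [Real.log_lt_sub_one_of_pos (hμ i) hi]⟩
  have htrace : A.trace = ∑ j, μ j := by simpa using hA.1.trace_eq_sum_eigenvalues
  have hlogdet : Real.log A.det = ∑ j, Real.log (μ j) := by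
    rw [hA.1.det_eq_prod_eigenvalues]
    simpa using Real.log_prod (fun j _ => (hμ j).ne')
  simp only [Finset.sum_sub_distrib, Finset.sum_const, Finset.card_univ, nsmul_eq_mul,
    mul_one] at hpos
  linarith

open scoped MatrixOrder in
theorem PosDef.eq_inv_of_trace_mul_sub_log_det_le {X M : Matrix ι ι ℝ} (hX : X.PosDef)
    (hM : M.PosDef)
    (h : (X * M).trace - Real.log X.det ≤ (M⁻¹ * M).trace - Real.log M⁻¹.det) :
    X = M⁻¹ := by
  obtain ⟨B, rfl⟩ := CStarAlgebra.nonneg_iff_eq_star_mul_self.mp hM.posSemidef.nonneg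
  rw [star_eq_conjTranspose] at hM h ⊢
  have hB : IsUnit B := (isUnit_iff_isUnit_det B).2 <| isUnit_of_mul_isUnit_right <| by
    rw [← det_mul, ← isUnit_iff_isUnit_det]
    exact hM.isUnit
  have hA : (B * X * Bᴴ).PosDef :=
    hX.mul_mul_conjTranspose_same (vecMul_injective_iff_isUnit.2 hB)
  have htrace : (B * X * Bᴴ).trace = (X * (Bᴴ * B)).trace := by
    rw [trace_mul_comm, ← Matrix.mul_assoc, trace_mul_comm]
  have hdet : (B * X * Bᴴ).det = X.det * (Bᴴ * B).det := by
    simp only [det_mul]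
    ring
  have hlogdet : Real.log (B * X * Bᴴ).det = Real.log X.det + Real.log (Bᴴ * B).det := by
    rw [hdet, Real.log_mul hX.det_pos.ne' hM.det_pos.ne']
  have hvalue : ((Bᴴ * B)⁻¹ * (Bᴴ * B)).trace - Real.log (Bᴴ * B)⁻¹.det =
      Fintype.card ι + Real.log (Bᴴ * B).det := by
    rw [nonsing_inv_mul _ hM.det_pos.ne'.isUnit, trace_one, det_nonsing_inv,
      Ring.inverse_eq_inv, Real.log_inv, sub_neg_eq_add]
  have hA1 : B * X * Bᴴ = 1 := hA.eq_one_of_trace_sub_log_det_le (by linarith)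
  refine (inv_eq_left_inv ?_).symm
  rw [← Matrix.mul_assoc, mul_eq_one_comm, ← Matrix.mul_assoc]
  exact hA1

theorem lagrangian_eq_trace_mul_sub_log_det {P Y : Matrix ι ι ℝ} (g : ι → ℝ) {lam : ℝ} (c : ℝ)
    (hP : P.det ≠ 0) (hY : Y.det ≠ 0) (hlam : lam ≠ 0) :
    (Y * vecMulVec g g).trace + lam * (-Real.log (Y * P⁻¹).det + (Y * P⁻¹).trace - c) =
      lam * ((Y * (P⁻¹ + lam⁻¹ • vecMulVec g g)).trace - Real.log Y.det) +
        lam * (Real.log P.det - c) := by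
  rw [Matrix.mul_add, trace_add, Matrix.mul_smul, trace_smul, det_mul, det_nonsing_inv,
    Ring.inverse_eq_inv, Real.log_mul hY (inv_ne_zero hP), Real.log_inv, smul_eq_mul]
  field_simp
  ring

end Matrix

theorem lagrangian_minimizer_inverse_update {n : ℕ}
    (Xprev : Matrix (Fin n) (Fin n) ℝ) (hXprev : Xprev.PosDef)
    (g : Fin n → ℝ) (lam : ℝ) (hlam : 0 < lam)
    (L : Matrix (Fin n) (Fin n) ℝ → ℝ)
    (hL : ∀ X : Matrix (Fin n) (Fin n) ℝ,
      L X = (X * Matrix.vecMulVec g g).trace +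
        lam * (-Real.log ((X * Xprev⁻¹).det) + (X * Xprev⁻¹).trace - n))
    (X : Matrix (Fin n) (Fin n) ℝ) (hX : X.PosDef)
    (hmin : ∀ Y : Matrix (Fin n) (Fin n) ℝ, Y.PosDef → L X ≤ L Y) :
    X⁻¹ = Xprev⁻¹ + lam⁻¹ • Matrix.vecMulVec g g := by
  set M := Xprev⁻¹ + lam⁻¹ • vecMulVec g g
  have hM : M.PosDef := hXprev.inv.add_posSemidef <|
    (by simpa using posSemidef_vecMulVec_self_star g : (vecMulVec g g).PosSemidef).smul
      (inv_nonneg.2 hlam.le)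
  have hLY (Y : Matrix (Fin n) (Fin n) ℝ) (hY : Y.PosDef) :
      L Y = lam * ((Y * M).trace - Real.log Y.det) + lam * (Real.log Xprev.det - n) :=
    (hL Y).trans <|
      lagrangian_eq_trace_mul_sub_log_det g _ hXprev.det_pos.ne' hY.det_pos.ne' hlam.ne'
  have hXM : X = M⁻¹ := hX.eq_inv_of_trace_mul_sub_log_det_le hM <| by
    have hle := hmin M⁻¹ hM.inv
    rw [hLY X hX, hLY _ hM.inv] at hle
    exact le_of_mul_le_mul_left (by linarith) hlam
  rw [hXM, nonsing_inv_nonsing_inv _ hM.det_pos.ne'.isUnit]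
end

section
/- Let X_t minimize -log det(X) + Tr(X(X_{t-1}⁻¹ + g gᵀ/λ)) over positive definite matrices X with sparsity pattern G. Then P_G(X_t⁻¹) = P_G(X_{t-1}⁻¹) + P_G(g gᵀ/λ); i.e., the projection of the inverse of the optimizer onto the sparsity pattern satisfies the additive update rule. -/
/-!
Write `A = X_{t-1}⁻¹ + g gᵀ / λ`. The objective `f(X) = -log det X + tr (X A)` satisfies
`d/dt f(X + t B)|_{t=0} = tr (B A) - tr (X⁻¹ B)` (expand `det (1 + t X⁻¹ B)` to first order).
Positive definiteness is an open condition among symmetric matrices, so for every symmetric `B`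
supported on `G` the matrices `X_t + t B` are admissible for small `|t|`, and `t = 0` is a local
minimum; hence `tr (X_t⁻¹ B) = tr (B A)`. Testing with `B = E_ij + E_ji` for each edge `ij` of
`G` and using the symmetry of `X_t⁻¹` and `A` gives `(X_t⁻¹)_ij = A_ij`.
-/

open Filter Topology

namespace Matrix

theorem isSymm_single_add_single {ι R : Type*} [DecidableEq ι] [AddCommMonoid R] (i j : ι)
    (a : R) : (single i j a + single j i a).IsSymm := by
  simp [IsSymm, add_comm]

section PositiveDefinite

variable {ι : Type*} [Fintype ι]

theorem PosDef.eventually_posDef_of_isHermitian {M : Matrix ι ι ℝ} (hM : M.PosDef) :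
    ∀ᶠ N in 𝓝 M, N.IsHermitian → N.PosDef := by
  have hquad : Continuous fun p : Matrix ι ι ℝ × (ι → ℝ) => p.2 ⬝ᵥ p.1 *ᵥ p.2 :=
    continuous_snd.dotProduct (continuous_fst.matrix_mulVec continuous_snd)
  have hsphere : ∀ᶠ N in 𝓝 M, ∀ u ∈ Metric.sphere (0 : ι → ℝ) 1, 0 < u ⬝ᵥ N *ᵥ u := by
    refine (isCompact_sphere 0 1).eventually_forall_of_forall_eventually fun u hu => ?_
    have hu : 0 < u ⬝ᵥ M *ᵥ u := by
      simpa using hM.dotProduct_mulVec_pos (ne_zero_of_mem_unit_sphere ⟨u, hu⟩)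
    exact hquad.continuousAt.eventually (eventually_gt_nhds hu)
  filter_upwards [hsphere] with N hN hNherm
  refine .of_dotProduct_mulVec_pos hNherm fun x hx => ?_
  have hnorm : 0 < ‖x‖ := norm_pos_iff.mpr hx
  have hscale : x ⬝ᵥ N *ᵥ x = ‖x‖ ^ 2 * ((‖x‖⁻¹ • x) ⬝ᵥ N *ᵥ (‖x‖⁻¹ • x)) := by
    simp only [mulVec_smul, dotProduct_smul, smul_dotProduct, smul_eq_mul]
    field_simp
  rw [star_trivial, hscale]
  exact mul_pos (by positivity) (hN _ (by simp [norm_smul, hnorm.ne']))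

theorem PosDef.eventually_posDef_add_smul {M B : Matrix ι ι ℝ} (hM : M.PosDef)
    (hB : B.IsHermitian) : ∀ᶠ t in 𝓝 (0 : ℝ), (M + t • B).PosDef := by
  have hcont : Continuous fun t : ℝ => M + t • B := by fun_prop
  have hpath : Tendsto (fun t : ℝ => M + t • B) (𝓝 0) (𝓝 M) := hcont.tendsto' 0 M (by simp)
  filter_upwards [hpath.eventually hM.eventually_posDef_of_isHermitian] with t ht
  exact ht (hM.isHermitian.add (hB.smul (IsSelfAdjoint.all t)))

end PositiveDefinite

variable {ι : Type*} [Fintype ι] [DecidableEq ι]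

theorem hasDerivAt_det_one_add_smul {𝕜 : Type*} [NontriviallyNormedField 𝕜]
    (C : Matrix ι ι 𝕜) : HasDerivAt (fun t : 𝕜 => (1 + t • C).det) C.trace 0 := by
  set q := (det (1 + (Polynomial.X : Polynomial 𝕜) • C.map Polynomial.C)).divX.divX
  have hq : HasDerivAt (fun t => q.eval t * t ^ 2) 0 0 := by
    simpa using (q.hasDerivAt 0).fun_mul (hasDerivAt_pow 2 (0 : 𝕜))
  have hexpansion := (((hasDerivAt_id (0 : 𝕜)).const_mul C.trace).const_add 1).add hq
  simp only [id, mul_one, add_zero] at hexpansion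
  exact hexpansion.congr_of_eventuallyEq (.of_eq (funext fun t => det_one_add_smul t C))

theorem hasDerivAt_det_add_smul {𝕜 : Type*} [NontriviallyNormedField 𝕜]
    {X : Matrix ι ι 𝕜} (B : Matrix ι ι 𝕜) (hX : IsUnit X.det) :
    HasDerivAt (fun t : 𝕜 => (X + t • B).det) (X.det * (X⁻¹ * B).trace) 0 := by
  have hfactor : ∀ t : 𝕜, X + t • B = X * (1 + t • (X⁻¹ * B)) := fun t => by
    rw [mul_add, mul_one, Matrix.mul_smul, mul_nonsing_inv_cancel_left _ _ hX]
  simp_rw [hfactor, det_mul]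
  exact (hasDerivAt_det_one_add_smul _).const_mul _

theorem hasDerivAt_log_det_add_smul {X : Matrix ι ι ℝ} (B : Matrix ι ι ℝ) (hX : X.det ≠ 0) :
    HasDerivAt (fun t : ℝ => Real.log (X + t • B).det) (X⁻¹ * B).trace 0 := by
  simpa [hX] using (hasDerivAt_det_add_smul B hX.isUnit).log (by simpa using hX)

noncomputable def logDetObjective (A X : Matrix ι ι ℝ) : ℝ :=
  -Real.log X.det + (X * A).trace

theorem trace_inv_mul_eq_of_isLocalMin {A X B : Matrix ι ι ℝ} (hX : X.det ≠ 0)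
    (hmin : IsLocalMin (fun t : ℝ => logDetObjective A (X + t • B)) 0) :
    (X⁻¹ * B).trace = (B * A).trace := by
  have htrace : HasDerivAt (fun t : ℝ => ((X + t • B) * A).trace) (B * A).trace 0 := by
    simp only [add_mul, smul_mul, trace_add, trace_smul, smul_eq_mul]
    simpa using ((hasDerivAt_id (0 : ℝ)).mul_const (B * A).trace).const_add (X * A).trace
  have hderiv : HasDerivAt (fun t : ℝ => logDetObjective A (X + t • B))
      (-(X⁻¹ * B).trace + (B * A).trace) 0 :=
    (hasDerivAt_log_det_add_smul B hX).neg.add htrace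
  linarith [hmin.hasDerivAt_eq_zero hderiv]

theorem trace_mul_single_add_single {R : Type*} [CommSemiring R] (P : Matrix ι ι R)
    (i j : ι) : (P * (single i j 1 + single j i 1)).trace = P j i + P i j := by
  simp [mul_add, trace_mul_single]

theorem apply_eq_of_trace_mul_single_add_single_eq {R : Type*} [Field R] [CharZero R]
    {P Q : Matrix ι ι R} (hP : P.IsSymm) (hQ : Q.IsSymm) {i j : ι}
    (h : (P * (single i j 1 + single j i 1)).trace = (Q * (single i j 1 + single j i 1)).trace) :
    P i j = Q i j := by
  rw [trace_mul_single_add_single, trace_mul_single_add_single, hP.apply, hQ.apply] at h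
  linear_combination h / 2

end Matrix

open Matrix

theorem sparse_logdet_minimizer_inverse_update_general {n : ℕ}
    (G : Fin n → Fin n → Prop) [DecidableRel G]
    (hGsym : ∀ i j, G i j → G j i)
    (PG : Matrix (Fin n) (Fin n) ℝ → Matrix (Fin n) (Fin n) ℝ)
    (hPG : ∀ M, PG M = Matrix.of (fun i j => if G i j then M i j else 0))
    (Xprev : Matrix (Fin n) (Fin n) ℝ) (hXprev : Xprev.PosDef)
    (g : Fin n → ℝ) (lam : ℝ)
    (Xt : Matrix (Fin n) (Fin n) ℝ) (hXt : Xt.PosDef)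
    (hXtSp : ∀ i j, ¬ G i j → Xt i j = 0)
    (hmin : ∀ Y : Matrix (Fin n) (Fin n) ℝ, Y.PosDef →
      (∀ i j, ¬ G i j → Y i j = 0) →
      -Real.log Xt.det + (Xt * (Xprev⁻¹ + lam⁻¹ • Matrix.vecMulVec g g)).trace ≤
      -Real.log Y.det + (Y * (Xprev⁻¹ + lam⁻¹ • Matrix.vecMulVec g g)).trace) :
    PG (Xt⁻¹) = PG (Xprev⁻¹) + PG (lam⁻¹ • Matrix.vecMulVec g g) := by
  set A := Xprev⁻¹ + lam⁻¹ • vecMulVec g g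
  have hA : A.IsSymm := (isHermitian_iff_isSymm.mp hXprev.inv.isHermitian).add
    ((IsSymm.ext fun i j => mul_comm (g j) (g i)).smul _)
  have first_order : ∀ B : Matrix (Fin n) (Fin n) ℝ, B.IsHermitian →
      (∀ i j, ¬ G i j → B i j = 0) → (Xt⁻¹ * B).trace = (B * A).trace := fun B hB hBG =>
    trace_inv_mul_eq_of_isLocalMin hXt.det_pos.ne' <| by
      filter_upwards [hXt.eventually_posDef_add_smul hB] with t ht
      rw [zero_smul, add_zero]
      exact hmin _ ht fun i j hij => by simp [hXtSp i j hij, hBG i j hij]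
  ext i j
  simp only [hPG, Matrix.add_apply, of_apply]
  split_ifs with hij
  · rw [← Matrix.add_apply]
    refine apply_eq_of_trace_mul_single_add_single_eq
      (isHermitian_iff_isSymm.mp hXt.inv.isHermitian) hA ?_
    rw [first_order _ (isHermitian_iff_isSymm.mpr (isSymm_single_add_single i j 1)),
      trace_mul_comm]
    intro a b hab
    rw [Matrix.add_apply, single_apply_of_ne, single_apply_of_ne, add_zero]
    · rintro ⟨rfl, rfl⟩
      exact hab (hGsym _ _ hij)
    · rintro ⟨rfl, rfl⟩
      exact hab hij
  · simp

theorem sparse_logdet_minimizer_inverse_update {n : ℕ}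
    (G : Fin n → Fin n → Prop) [DecidableRel G]
    (hGrefl : ∀ i, G i i) (hGsym : ∀ i j, G i j → G j i)
    (PG : Matrix (Fin n) (Fin n) ℝ → Matrix (Fin n) (Fin n) ℝ)
    (hPG : ∀ M, PG M = Matrix.of (fun i j => if G i j then M i j else 0))
    (Xprev : Matrix (Fin n) (Fin n) ℝ) (hXprev : Xprev.PosDef)
    (hXprevSp : ∀ i j, ¬ G i j → Xprev i j = 0)
    (g : Fin n → ℝ) (lam : ℝ) (hlam : 0 < lam)
    (Xt : Matrix (Fin n) (Fin n) ℝ) (hXt : Xt.PosDef)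
    (hXtSp : ∀ i j, ¬ G i j → Xt i j = 0)
    (hmin : ∀ Y : Matrix (Fin n) (Fin n) ℝ, Y.PosDef →
      (∀ i j, ¬ G i j → Y i j = 0) →
      -Real.log Xt.det + (Xt * (Xprev⁻¹ + lam⁻¹ • Matrix.vecMulVec g g)).trace ≤
      -Real.log Y.det + (Y * (Xprev⁻¹ + lam⁻¹ • Matrix.vecMulVec g g)).trace) :
    PG (Xt⁻¹) = PG (Xprev⁻¹) + PG (lam⁻¹ • Matrix.vecMulVec g g) :=
  sparse_logdet_minimizer_inverse_update_general G hGsym PG hPG Xprev hXprev g lam Xt hXt hXtSp hmin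
end

section
/- Let G be the chain graph on [n] with edges {(i,j) : |i-j| ≤ 1}, and let H ∈ S_n(G) be a tridiagonal matrix such that every 2×2 principal submatrix [[H_{ii}, H_{i,i+1}],[H_{i+1,i}, H_{i+1,i+1}]] is positive definite. Define L unit lower bidiagonal with L_{j+1,j} = -H_{j+1,j}/H_{j+1,j+1}, and D diagonal with D_{jj}⁻¹ = H_{jj} - H_{j+1,j}²/H_{j+1,j+1} for j ≤ n-1 and D_{nn}⁻¹ = H_{nn}. Then X = L D Lᵀ is positive definite, tridiagonal, and satisfies P_G(X⁻¹) = H; equivalently, X is the unique minimizer of -log det(X) + Tr(XH) over S_n(G)^{++}. -/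
/-!
Since `X⁻¹ = (Lᵀ)⁻¹ D⁻¹ L⁻¹`, the matrix `X⁻¹ L = (Lᵀ)⁻¹ D⁻¹` is upper triangular with diagonal
`D⁻¹`, and `L` has only two nonzero entries per column. Reading the entries `(j, j)` and
`(j + 1, j)` of this identity from the last index upwards shows that `X⁻¹` agrees with `H` on the
tridiagonal band; the pivots `D⁻¹` are the Schur complements of the `2 × 2` blocks, hence positive.

For optimality, a tridiagonal `Y` only sees the band of `H`, so `Tr (Y H) = Tr (Y X⁻¹)`. With
`M = X^{-1/2} Y X^{-1/2}`, the gap `-log det Y + Tr (Y X⁻¹) - (-log det X + n)` equals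
`∑ (μ - 1 - log μ)` over the eigenvalues `μ` of `M`, which is positive unless `M = 1`, i.e. `Y = X`.
-/

open Matrix

section Triangular

variable {m R : Type*} [Fintype m] [LinearOrder m] [CommRing R]

theorem Matrix.IsUpperTriangular.mul_apply_self {A B : Matrix m m R} (hA : A.IsUpperTriangular)
    (hB : B.IsUpperTriangular) (i : m) : (A * B) i i = A i i * B i i := by
  rw [mul_apply]
  refine Finset.sum_eq_single i (fun k _ hki => ?_) (by simp)
  rcases hki.lt_or_gt with hlt | hgt
  · rw [hA hlt, zero_mul]
  · rw [hB hgt, mul_zero]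

theorem Matrix.IsUpperTriangular.det_eq_one {U : Matrix m m R} (hU : U.IsUpperTriangular)
    (hdiag : ∀ i, U i i = 1) : U.det = 1 := by
  simp [det_of_isUpperTriangular hU, hdiag]

theorem Matrix.IsUpperTriangular.inv_apply_of_le {U : Matrix m m R}
    (hU : U.IsUpperTriangular) (hdiag : ∀ i, U i i = 1) {i j : m} (hji : j ≤ i) :
    U⁻¹ i j = (1 : Matrix m m R) i j := by
  have hdet : IsUnit U.det := by rw [hU.det_eq_one hdiag]; exact isUnit_one
  have : Invertible U := invertibleOfIsUnitDet U hdet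
  have hinv : U⁻¹.IsUpperTriangular := blockTriangular_inv_of_blockTriangular hU
  rcases hji.lt_or_eq with hlt | rfl
  · rw [hinv hlt, one_apply_ne hlt.ne']
  · have h := hU.mul_apply_self hinv j
    rw [mul_nonsing_inv U hdet, hdiag, one_mul] at h
    exact h.symm

end Triangular

theorem Matrix.mul_mul_transpose_inv_mul_eq {m : Type*} [Fintype m] [DecidableEq m]
    {R : Type*} [CommRing R] {L D E : Matrix m m R} (hL : IsUnit L.det) (hDE : D * E = 1) :
    (L * D * Lᵀ)⁻¹ * L = (Lᵀ)⁻¹ * E := by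
  rw [Matrix.mul_inv_rev, Matrix.mul_inv_rev, inv_eq_right_inv hDE, Matrix.mul_assoc,
    Matrix.mul_assoc, nonsing_inv_mul L hL, Matrix.mul_one]

section Bidiagonal

variable {n : ℕ} {R : Type*} [CommRing R]

def unitLowerBidiag (s : Matrix (Fin n) (Fin n) R) : Matrix (Fin n) (Fin n) R :=
  Matrix.of fun i j => if i = j then 1 else if (i : ℕ) = (j : ℕ) + 1 then s i j else 0

variable (s : Matrix (Fin n) (Fin n) R)

theorem unitLowerBidiag_apply_self (i : Fin n) : unitLowerBidiag s i i = 1 := by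
  simp [unitLowerBidiag]

theorem unitLowerBidiag_apply_succ (j : Fin n) (h : (j : ℕ) + 1 < n) :
    unitLowerBidiag s ⟨j + 1, h⟩ j = s ⟨j + 1, h⟩ j := by
  simp [unitLowerBidiag, Fin.ext_iff]

theorem eq_or_eq_succ_of_unitLowerBidiag_apply_ne_zero {i j : Fin n}
    (h : unitLowerBidiag s i j ≠ 0) : (i : ℕ) = j ∨ (i : ℕ) = j + 1 := by
  simp only [unitLowerBidiag, of_apply] at h
  split_ifs at h with h₁ h₂
  · exact Or.inl (congrArg Fin.val h₁)
  · exact Or.inr h₂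
  · exact absurd rfl h

theorem isUpperTriangular_transpose_unitLowerBidiag : (unitLowerBidiag s)ᵀ.IsUpperTriangular := by
  intro i j hij
  by_contra h
  have := eq_or_eq_succ_of_unitLowerBidiag_apply_ne_zero s h
  have : (j : ℕ) < i := hij
  omega

theorem det_unitLowerBidiag : (unitLowerBidiag s).det = 1 := by
  rw [← det_transpose]
  exact (isUpperTriangular_transpose_unitLowerBidiag s).det_eq_one fun i =>
    unitLowerBidiag_apply_self s i

theorem mul_unitLowerBidiag_apply (A : Matrix (Fin n) (Fin n) R) (i j : Fin n) :
    (A * unitLowerBidiag s) i j =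
      A i j + if h : (j : ℕ) + 1 < n then A i ⟨j + 1, h⟩ * s ⟨j + 1, h⟩ j else 0 := by
  rw [mul_apply]
  split_ifs with h
  · have hcol : ∀ k, unitLowerBidiag s k j =
        (Pi.single j 1 : Fin n → R) k + (Pi.single ⟨j + 1, h⟩ (s ⟨j + 1, h⟩ j) : Fin n → R) k := by
      intro k
      by_cases hk : (k : ℕ) = j + 1
      · obtain rfl : k = ⟨j + 1, h⟩ := Fin.ext hk
        simp [unitLowerBidiag_apply_succ, Fin.ext_iff]
      · simp [unitLowerBidiag, Pi.single_apply, Fin.ext_iff, hk]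
    simp [hcol, mul_add, Finset.sum_add_distrib, Pi.single_apply]
  · have hcol : ∀ k, unitLowerBidiag s k j = (Pi.single j 1 : Fin n → R) k := by
      intro k
      simp only [unitLowerBidiag, of_apply, Pi.single_apply]
      split_ifs <;> first | rfl | omega
    simp [hcol, Pi.single_apply]

theorem unitLowerBidiag_mul_diagonal_mul_transpose_apply_eq_zero (d : Fin n → R) {i j : Fin n}
    (hij : (i : ℕ) + 1 < j ∨ (j : ℕ) + 1 < i) :
    (unitLowerBidiag s * diagonal d * (unitLowerBidiag s)ᵀ) i j = 0 := by
  rw [mul_apply]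
  refine Finset.sum_eq_zero fun k _ => ?_
  rw [mul_diagonal, transpose_apply]
  by_contra h
  have hi := eq_or_eq_succ_of_unitLowerBidiag_apply_ne_zero s
    (left_ne_zero_of_mul (left_ne_zero_of_mul h))
  have hj := eq_or_eq_succ_of_unitLowerBidiag_apply_ne_zero s (right_ne_zero_of_mul h)
  omega

theorem inv_mul_unitLowerBidiag_apply_of_le {K : Type*} [Field K] (s : Matrix (Fin n) (Fin n) K)
    {d : Fin n → K} (hd : ∀ i, d i ≠ 0) {i j : Fin n} (hji : j ≤ i) :
    ((unitLowerBidiag s * diagonal d⁻¹ * (unitLowerBidiag s)ᵀ)⁻¹ * unitLowerBidiag s) i j =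
      if i = j then d j else 0 := by
  have hDE : diagonal d⁻¹ * diagonal d = 1 := by
    rw [diagonal_mul_diagonal, ← diagonal_one]
    exact congrArg diagonal (funext fun i => inv_mul_cancel₀ (hd i))
  rw [mul_mul_transpose_inv_mul_eq (by simp [det_unitLowerBidiag]) hDE, mul_diagonal,
    (isUpperTriangular_transpose_unitLowerBidiag s).inv_apply_of_le (unitLowerBidiag_apply_self s)
      hji, one_apply]
  split_ifs <;> simp

end Bidiagonal

section SchurPivot

variable {n : ℕ} {K : Type*} [Field K]

def schurPivot (H : Matrix (Fin n) (Fin n) K) (j : Fin n) : K :=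
  if h : (j : ℕ) + 1 < n then H j j - H ⟨j + 1, h⟩ j ^ 2 / H ⟨j + 1, h⟩ ⟨j + 1, h⟩ else H j j

def tridiagMultipliers (H : Matrix (Fin n) (Fin n) K) : Matrix (Fin n) (Fin n) K :=
  Matrix.of fun i j => -H i j / H i i

variable {H W : Matrix (Fin n) (Fin n) K}

theorem apply_succ_self_eq_of_mul_unitLowerBidiag (hH : ∀ i, H i i ≠ 0)
    (hW : ∀ i j, j ≤ i →
      (W * unitLowerBidiag (tridiagMultipliers H)) i j = if i = j then schurPivot H j else 0)
    (j : Fin n) (h : (j : ℕ) + 1 < n)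
    (hdiag : W ⟨j + 1, h⟩ ⟨j + 1, h⟩ = H ⟨j + 1, h⟩ ⟨j + 1, h⟩) :
    W ⟨j + 1, h⟩ j = H ⟨j + 1, h⟩ j := by
  have hrow := hW ⟨j + 1, h⟩ j (Fin.mk_le_mk.mpr (Nat.le_succ j))
  rw [mul_unitLowerBidiag_apply, dif_pos h, if_neg (Fin.ne_of_val_ne (Nat.succ_ne_self j)),
    hdiag, tridiagMultipliers, of_apply, mul_div_cancel₀ _ (hH _)] at hrow
  linear_combination hrow

theorem apply_self_eq_of_mul_unitLowerBidiag (hH : ∀ i, H i i ≠ 0) (hWsymm : W.IsSymm)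
    (hW : ∀ i j, j ≤ i →
      (W * unitLowerBidiag (tridiagMultipliers H)) i j = if i = j then schurPivot H j else 0)
    (j : Fin n) : W j j = H j j := by
  have hrow := hW j j le_rfl
  rw [mul_unitLowerBidiag_apply, if_pos rfl, schurPivot] at hrow
  split_ifs at hrow with h
  · have hsub := apply_succ_self_eq_of_mul_unitLowerBidiag hH hW j h
      (apply_self_eq_of_mul_unitLowerBidiag hH hWsymm hW ⟨j + 1, h⟩)
    rw [hWsymm.apply ⟨j + 1, h⟩ j, hsub, tridiagMultipliers, of_apply] at hrow
    linear_combination hrow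
  · simpa using hrow
termination_by n - j

theorem apply_eq_of_mul_unitLowerBidiag (hH : ∀ i, H i i ≠ 0) (hHsymm : H.IsSymm)
    (hWsymm : W.IsSymm)
    (hW : ∀ i j, j ≤ i →
      (W * unitLowerBidiag (tridiagMultipliers H)) i j = if i = j then schurPivot H j else 0)
    {i j : Fin n} (hij : ¬((i : ℕ) + 1 < j ∨ (j : ℕ) + 1 < i)) : W i j = H i j := by
  have hsub (j : Fin n) (h : (j : ℕ) + 1 < n) : W ⟨j + 1, h⟩ j = H ⟨j + 1, h⟩ j :=
    apply_succ_self_eq_of_mul_unitLowerBidiag hH hW j h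
      (apply_self_eq_of_mul_unitLowerBidiag hH hWsymm hW _)
  rcases lt_trichotomy (i : ℕ) j with hlt | heq | hgt
  · have h : (i : ℕ) + 1 < n := by omega
    obtain rfl : j = ⟨i + 1, h⟩ := Fin.ext (show (j : ℕ) = i + 1 by omega)
    rw [← hWsymm.apply, ← hHsymm.apply, hsub]
  · obtain rfl := Fin.ext heq
    exact apply_self_eq_of_mul_unitLowerBidiag hH hWsymm hW i
  · have h : (j : ℕ) + 1 < n := by omega
    obtain rfl : i = ⟨j + 1, h⟩ := Fin.ext (show (i : ℕ) = j + 1 by omega)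
    exact hsub j h

end SchurPivot

theorem schurPivot_pos {n : ℕ} {H : Matrix (Fin n) (Fin n) ℝ} (hdiag : ∀ i, 0 < H i i)
    (h2x2 : ∀ (i : Fin n) (h : (i : ℕ) + 1 < n),
      0 < H i i * H ⟨(i : ℕ) + 1, h⟩ ⟨(i : ℕ) + 1, h⟩ - (H ⟨(i : ℕ) + 1, h⟩ i) ^ 2)
    (j : Fin n) : 0 < schurPivot H j := by
  rw [schurPivot]
  split_ifs with h
  · have hd := hdiag ⟨j + 1, h⟩
    rw [sub_pos, div_lt_iff₀ hd]
    linarith [h2x2 j h]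
  · exact hdiag j

theorem Matrix.posDef_mul_diagonal_mul_transpose {m : Type*} [Fintype m] [DecidableEq m]
    {L : Matrix m m ℝ} (hL : IsUnit L.det) {d : m → ℝ} (hd : ∀ i, 0 < d i) :
    (L * diagonal d * Lᵀ).PosDef := by
  simpa using (PosDef.diagonal hd).mul_mul_conjTranspose_same (vecMul_injective_iff_isUnit.mpr
    ((isUnit_iff_isUnit_det L).mpr hL))

theorem Matrix.trace_mul_congr_right {m α : Type*} [Fintype m] [NonUnitalNonAssocSemiring α]
    {P Q R : Matrix m m α} (h : ∀ i j, P i j ≠ 0 → Q j i = R j i) :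
    (P * Q).trace = (P * R).trace := by
  refine Finset.sum_congr rfl fun i _ => Finset.sum_congr rfl fun j _ => ?_
  by_cases hP : P i j = 0
  · simp [hP]
  · exact congrArg (P i j * ·) (h i j hP)

section LogDet

variable {m : Type*} [Fintype m] [DecidableEq m]

theorem Matrix.PosDef.log_det_lt_trace_sub_card {M : Matrix m m ℝ} (hM : M.PosDef)
    (hne : M ≠ 1) :
    Real.log M.det < M.trace - Fintype.card m := by
  have hμ : ∃ i, hM.1.eigenvalues i ≠ 1 := by
    by_contra! hμ
    refine hne ?_
    conv_lhs => rw [hM.1.spectral_theorem, show hM.1.eigenvalues = 1 from funext hμ]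
    simp
  obtain ⟨i₀, hi₀⟩ := hμ
  have hlog : ∑ i, Real.log (hM.1.eigenvalues i) < ∑ i, (hM.1.eigenvalues i - 1) :=
    Finset.sum_lt_sum (fun i _ => Real.log_le_sub_one_of_pos (hM.eigenvalues_pos i))
      ⟨i₀, Finset.mem_univ _, Real.log_lt_sub_one_of_pos (hM.eigenvalues_pos i₀) hi₀⟩
  rw [hM.1.det_eq_prod_eigenvalues, hM.1.trace_eq_sum_eigenvalues]
  simpa [Real.log_prod (fun i _ => (hM.eigenvalues_pos i).ne'), Finset.sum_sub_distrib] using hlog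

open scoped MatrixOrder in
theorem Matrix.PosDef.neg_log_det_add_card_lt {X Y : Matrix m m ℝ} (hX : X.PosDef)
    (hY : Y.PosDef) (hne : Y ≠ X) :
    -Real.log X.det + Fintype.card m < -Real.log Y.det + (Y * X⁻¹).trace := by
  set R := CFC.sqrt X⁻¹
  have hRR : R * R = X⁻¹ := CFC.sqrt_mul_sqrt_self _ hX.inv.posSemidef.nonneg
  have hRT : Rᵀ = R := by
    rw [← conjTranspose_eq_transpose_of_trivial]
    exact (nonneg_iff_posSemidef.mp (CFC.sqrt_nonneg _)).1
  have hXdet := hX.det_pos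
  have hdetR : R.det * R.det = X.det⁻¹ := by
    rw [← det_mul, hRR, det_nonsing_inv, Ring.inverse_eq_inv']
  have hRunit : IsUnit R.det := by
    refine isUnit_iff_ne_zero.mpr fun h => ?_
    rw [h, zero_mul] at hdetR
    exact (inv_pos.mpr hXdet).ne' hdetR.symm
  have hM : (R * Y * R).PosDef := by
    simpa [hRT] using hY.mul_mul_conjTranspose_same (vecMul_injective_iff_isUnit.mpr
      ((isUnit_iff_isUnit_det R).mpr hRunit))
  have hMne : R * Y * R ≠ 1 := fun h => hne <| by
    rw [Matrix.mul_assoc, mul_eq_one_comm, Matrix.mul_assoc, hRR] at h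
    rw [← inv_eq_left_inv h, nonsing_inv_nonsing_inv X hXdet.ne'.isUnit]
  have hdet : Real.log (R * Y * R).det = Real.log Y.det - Real.log X.det := by
    rw [show (R * Y * R).det = Y.det * X.det⁻¹ by rw [det_mul, det_mul, ← hdetR]; ring,
      Real.log_mul hY.det_pos.ne' (inv_ne_zero hXdet.ne'), Real.log_inv, sub_eq_add_neg]
  have htrace : (R * Y * R).trace = (Y * X⁻¹).trace := by
    rw [trace_mul_cycle, hRR, trace_mul_comm]
  have := hM.log_det_lt_trace_sub_card hMne
  rw [hdet, htrace] at this
  linarith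

end LogDet

theorem tridiag_logdet_explicit_solution_general {n : ℕ}
    (H : Matrix (Fin n) (Fin n) ℝ) (hsym : H.IsSymm)
    (hdiag : ∀ i, 0 < H i i)
    (h2x2 : ∀ (i : Fin n) (h : (i : ℕ) + 1 < n),
      0 < H i i * H ⟨(i : ℕ) + 1, h⟩ ⟨(i : ℕ) + 1, h⟩ - (H ⟨(i : ℕ) + 1, h⟩ i) ^ 2)
    (L Dm X : Matrix (Fin n) (Fin n) ℝ)
    (hL : ∀ i j : Fin n, L i j =
      if i = j then 1
      else if (i : ℕ) = (j : ℕ) + 1 then -(H i j) / H i i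
      else 0)
    (hD : Dm = Matrix.diagonal (fun j : Fin n =>
      if h : (j : ℕ) + 1 < n then
        (H j j - (H ⟨(j : ℕ) + 1, h⟩ j) ^ 2 / H ⟨(j : ℕ) + 1, h⟩ ⟨(j : ℕ) + 1, h⟩)⁻¹
      else (H j j)⁻¹))
    (hX : X = L * Dm * Lᵀ) :
    X.PosDef ∧
    (∀ i j : Fin n, ((i : ℕ) + 1 < (j : ℕ) ∨ (j : ℕ) + 1 < (i : ℕ)) → X i j = 0) ∧
    (∀ i j : Fin n, ¬ ((i : ℕ) + 1 < (j : ℕ) ∨ (j : ℕ) + 1 < (i : ℕ)) → X⁻¹ i j = H i j) ∧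
    (∀ Y : Matrix (Fin n) (Fin n) ℝ, Y.PosDef →
      (∀ i j : Fin n, ((i : ℕ) + 1 < (j : ℕ) ∨ (j : ℕ) + 1 < (i : ℕ)) → Y i j = 0) →
      Y ≠ X →
      -Real.log X.det + (X * H).trace < -Real.log Y.det + (Y * H).trace) := by
  obtain rfl : L = unitLowerBidiag (tridiagMultipliers H) := by ext i j; rw [hL]; rfl
  obtain rfl : Dm = diagonal (schurPivot H)⁻¹ := by
    rw [hD]; congr 1; funext j; simp only [Pi.inv_apply, schurPivot]; split_ifs <;> rfl
  have hpivot := schurPivot_pos hdiag h2x2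
  have hXpd : X.PosDef := hX ▸ posDef_mul_diagonal_mul_transpose
    (by simp [det_unitLowerBidiag]) fun j => inv_pos.mpr (hpivot j)
  have hXband (i j : Fin n) (hij : (i : ℕ) + 1 < j ∨ (j : ℕ) + 1 < i) : X i j = 0 :=
    hX ▸ unitLowerBidiag_mul_diagonal_mul_transpose_apply_eq_zero _ _ hij
  have hband (i j : Fin n) (hij : ¬((i : ℕ) + 1 < j ∨ (j : ℕ) + 1 < i)) : X⁻¹ i j = H i j :=
    apply_eq_of_mul_unitLowerBidiag (fun i => (hdiag i).ne') hsym
      (isHermitian_iff_isSymm.mp hXpd.inv.1)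
      (fun i j hji => hX ▸ inv_mul_unitLowerBidiag_apply_of_le _ (fun j => (hpivot j).ne') hji) hij
  have htrace {Y : Matrix (Fin n) (Fin n) ℝ}
      (hY : ∀ i j : Fin n, ((i : ℕ) + 1 < j ∨ (j : ℕ) + 1 < i) → Y i j = 0) :
      (Y * H).trace = (Y * X⁻¹).trace :=
    trace_mul_congr_right fun i j hYij => (hband j i fun h => hYij (hY i j h.symm)).symm
  refine ⟨hXpd, hXband, hband, fun Y hY hYband hne => ?_⟩
  rw [htrace hYband, htrace hXband, mul_nonsing_inv X hXpd.det_pos.ne'.isUnit, trace_one]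
  simpa using hXpd.neg_log_det_add_card_lt hY hne

theorem tridiag_logdet_explicit_solution {n : ℕ}
    (H : Matrix (Fin n) (Fin n) ℝ) (hsym : H.IsSymm)
    (hsp : ∀ i j : Fin n, ((i : ℕ) + 1 < (j : ℕ) ∨ (j : ℕ) + 1 < (i : ℕ)) → H i j = 0)
    (hdiag : ∀ i, 0 < H i i)
    (h2x2 : ∀ (i : Fin n) (h : (i : ℕ) + 1 < n),
      0 < H i i * H ⟨(i : ℕ) + 1, h⟩ ⟨(i : ℕ) + 1, h⟩ - (H ⟨(i : ℕ) + 1, h⟩ i) ^ 2)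
    (L Dm X : Matrix (Fin n) (Fin n) ℝ)
    (hL : ∀ i j : Fin n, L i j =
      if i = j then 1
      else if (i : ℕ) = (j : ℕ) + 1 then -(H i j) / H i i
      else 0)
    (hD : Dm = Matrix.diagonal (fun j : Fin n =>
      if h : (j : ℕ) + 1 < n then
        (H j j - (H ⟨(j : ℕ) + 1, h⟩ j) ^ 2 / H ⟨(j : ℕ) + 1, h⟩ ⟨(j : ℕ) + 1, h⟩)⁻¹
      else (H j j)⁻¹))
    (hX : X = L * Dm * Lᵀ) :
    X.PosDef ∧
    (∀ i j : Fin n, ((i : ℕ) + 1 < (j : ℕ) ∨ (j : ℕ) + 1 < (i : ℕ)) → X i j = 0) ∧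
    (∀ i j : Fin n, ¬ ((i : ℕ) + 1 < (j : ℕ) ∨ (j : ℕ) + 1 < (i : ℕ)) → X⁻¹ i j = H i j) ∧
    (∀ Y : Matrix (Fin n) (Fin n) ℝ, Y.PosDef →
      (∀ i j : Fin n, ((i : ℕ) + 1 < (j : ℕ) ∨ (j : ℕ) + 1 < (i : ℕ)) → Y i j = 0) →
      Y ≠ X →
      -Real.log X.det + (X * H).trace < -Real.log Y.det + (Y * H).trace) :=
  tridiag_logdet_explicit_solution_general H hsym hdiag h2x2 L Dm X hL hD hX
end

section
/- Let G be the banded graph of bandwidth b on [n] with edges {(i,j): |i-j| ≤ b}, H ∈ S_n(G) with every principal submatrix H_{JJ} for J = {j, j+1, ..., min(j+b,n)} positive definite. For each j set I_j = {j+1,...,j+b} ∩ [n], define L unit lower triangular banded with L_{I_j,j} = -H_{I_jI_j}⁻¹ H_{I_j,j}, and D diagonal with D_{jj}⁻¹ = H_{jj} - H_{I_j,j}ᵀ H_{I_jI_j}⁻¹ H_{I_j,j}. Then X = L D Lᵀ is the minimizer over S_n(G)^{++} of -log det(X) + Tr(XH), and in particular P_G(X⁻¹) = H. -/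
/-!
Column `j` of `L` is `e_j - H_{I_j I_j}⁻¹ H_{I_j j}`, so `(H L)_{ij} = 0` for `j < i ≤ j + b`,
and `(H L)_{jj} = d_j := D_{jj}⁻¹` is the Schur complement of `H_{I_j I_j}` in the positive
definite `H_{J J}`, hence positive. So `X = L D Lᵀ` is positive definite and banded, and both `X⁻¹ = L⁻ᵀ D⁻¹ L⁻¹` and
`H` solve `(Lᵀ G)_{iq} = δ_{iq} d_i` for `i ≤ q ≤ i + b`. For symmetric `G` these equations
determine `G` on the band by back substitution over the rows, so `X⁻¹ = H` on the band.
For banded `Y` this gives `tr (Y H) = tr (Y X⁻¹)`, and `log det (X⁻¹ Y) ≤ tr (X⁻¹ Y) - n`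
(from `log λ ≤ λ - 1` on the eigenvalues) is exactly the optimality of `X`.
-/

open Matrix

/-- The index set I_j = {j+1, ..., j+b} ∩ [n] as a subtype of `Fin n`. -/
def bandIdx (n b : ℕ) (j : Fin n) : Type :=
  {k : Fin n // (j : ℕ) < (k : ℕ) ∧ (k : ℕ) ≤ (j : ℕ) + b}

instance (n b : ℕ) (j : Fin n) : Fintype (bandIdx n b j) :=
  Subtype.fintype _

instance (n b : ℕ) (j : Fin n) : DecidableEq (bandIdx n b j) :=
  Subtype.instDecidableEq

/-- The principal submatrix H_{I_j I_j}. -/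
def subH {n : ℕ} (b : ℕ) (H : Matrix (Fin n) (Fin n) ℝ) (j : Fin n) :
    Matrix (bandIdx n b j) (bandIdx n b j) ℝ :=
  H.submatrix (fun k => k.1) (fun k => k.1)

/-- The subvector H_{I_j, j}. -/
def subv {n : ℕ} (b : ℕ) (H : Matrix (Fin n) (Fin n) ℝ) (j : Fin n) :
    bandIdx n b j → ℝ :=
  fun k => H k.1 j

namespace Matrix

section Fintype

variable {ι : Type*} [Fintype ι]

theorem dotProduct_mulVec_eq_submatrix_of_support {R : Type*} [NonUnitalNonAssocSemiring R]
    (p : ι → Prop) [DecidablePred p] (M : Matrix ι ι R) {v : ι → R}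
    (hv : ∀ i, ¬ p i → v i = 0) :
    v ⬝ᵥ (M *ᵥ v) = (fun k : Subtype p => v k) ⬝ᵥ
      (M.submatrix ((↑) : Subtype p → ι) ((↑) : Subtype p → ι) *ᵥ fun k => v k) := by
  have restrict : ∀ f : ι → R, (∀ i, ¬ p i → f i = 0) → ∑ i, f i = ∑ k : Subtype p, f k :=
    fun f hf => by
      rw [← Fintype.sum_subtype_add_sum_subtype p f,
        Fintype.sum_eq_zero (fun k : {i // ¬ p i} => f k) fun k => hf k k.2, add_zero]
  simp only [dotProduct, mulVec, submatrix_apply]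
  rw [restrict _ fun i hi => by rw [hv i hi, zero_mul]]
  refine Finset.sum_congr rfl fun k _ => congrArg _ (restrict _ fun i hi => ?_)
  rw [hv i hi, mul_zero]

theorem trace_mul_eq_of_eq_on_support {R : Type*} [NonUnitalNonAssocSemiring R]
    {Y A B : Matrix ι ι R} (h : ∀ i k, Y i k ≠ 0 → A k i = B k i) :
    (Y * A).trace = (Y * B).trace := by
  refine Finset.sum_congr rfl fun i _ => Finset.sum_congr rfl fun k _ => ?_
  show Y i k * A k i = Y i k * B k i
  by_cases hY : Y i k = 0
  · simp [hY]
  · rw [h i k hY]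

variable [DecidableEq ι]

theorem PosDef.log_det_le_trace_sub_card {A : Matrix ι ι ℝ} (hA : A.PosDef) :
    Real.log A.det ≤ A.trace - Fintype.card ι := by
  rw [hA.1.det_eq_prod_eigenvalues, hA.1.trace_eq_sum_eigenvalues]
  simp only [RCLike.ofReal_real_eq_id, id]
  rw [Real.log_prod fun i _ => (hA.eigenvalues_pos i).ne', ← Finset.card_univ,
    Finset.card_eq_sum_ones, Nat.cast_sum, Nat.cast_one, ← Finset.sum_sub_distrib]
  exact Finset.sum_le_sum fun i _ => Real.log_le_sub_one_of_pos (hA.eigenvalues_pos i)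

open scoped MatrixOrder in
theorem PosDef.log_det_mul_le_trace_mul_sub_card {A B : Matrix ι ι ℝ} (hA : A.PosDef)
    (hB : B.PosDef) : Real.log (A * B).det ≤ (A * B).trace - Fintype.card ι := by
  obtain ⟨C, hC, rfl⟩ := CStarAlgebra.isStrictlyPositive_iff_eq_star_mul_self.mp
    hA.isStrictlyPositive
  have hCBC : (C * B * star C).PosDef := (IsUnit.posDef_star_right_conjugate_iff hC).mpr hB
  have hdet : (star C * C * B).det = (C * B * star C).det := by
    simp only [det_mul]; ring
  rw [hdet, ← trace_mul_cycle C B (star C)]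
  exact hCBC.log_det_le_trace_sub_card

end Fintype

section LowerTriangular

variable {ι K : Type*} [Fintype ι] [DecidableEq ι] [LinearOrder ι] [Field K]

theorem IsLowerTriangular.det_eq_one {L : Matrix ι ι K} (hL : L.IsLowerTriangular)
    (hdiag : ∀ i, L i i = 1) : L.det = 1 := by
  rw [det_of_isLowerTriangular L hL]
  exact Finset.prod_eq_one fun i _ => hdiag i

theorem IsLowerTriangular.inv_apply_of_le {L : Matrix ι ι K} (hL : L.IsLowerTriangular)
    (hdiag : ∀ i, L i i = 1) {i q : ι} (hiq : i ≤ q) : L⁻¹ i q = (1 : Matrix ι ι K) i q := by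
  have hdet : IsUnit L.det := by rw [hL.det_eq_one hdiag]; exact isUnit_one
  have := invertibleOfIsUnitDet L hdet
  have hinv : L⁻¹.IsLowerTriangular := blockTriangular_inv_of_blockTriangular hL
  rcases hiq.lt_or_eq with hlt | rfl
  · rw [hinv hlt, one_apply_ne hlt.ne]
  · have h := congrFun (congrFun (nonsing_inv_mul L hdet) i) i
    rwa [mul_apply, Fintype.sum_eq_single i fun k hk => ?_, hdiag, mul_one] at h
    rcases lt_or_gt_of_ne hk with hki | hik
    · rw [hL hki, mul_zero]
    · rw [hinv hik, zero_mul]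

theorem IsLowerTriangular.transpose_mul_inv_apply_of_le {L : Matrix ι ι K}
    (hL : L.IsLowerTriangular) (hdiag : ∀ i, L i i = 1) {c : ι → K} (hc : ∀ i, c i ≠ 0)
    {i q : ι} (hiq : i ≤ q) :
    (Lᵀ * (L * diagonal c⁻¹ * Lᵀ)⁻¹) i q = if i = q then c i else 0 := by
  have hdet : IsUnit Lᵀ.det := by rw [det_transpose, hL.det_eq_one hdiag]; exact isUnit_one
  have hD : (diagonal c⁻¹)⁻¹ = diagonal c := inv_eq_left_inv <| by
    rw [diagonal_mul_diagonal, ← diagonal_one]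
    exact congrArg diagonal (funext fun j => mul_inv_cancel₀ (hc j))
  rw [mul_inv_rev, mul_inv_rev, ← mul_assoc, mul_nonsing_inv _ hdet, one_mul, hD,
    diagonal_mul, hL.inv_apply_of_le hdiag hiq, one_apply]
  split_ifs <;> simp

theorem IsLowerTriangular.posDef_mul_diagonal_mul_transpose {L : Matrix ι ι ℝ}
    (hL : L.IsLowerTriangular) (hdiag : ∀ i, L i i = 1) {d : ι → ℝ} (hd : ∀ i, 0 < d i) :
    (L * diagonal d * Lᵀ).PosDef := by
  have hdet : IsUnit L := by
    rw [isUnit_iff_isUnit_det, hL.det_eq_one hdiag]; exact isUnit_one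
  have h := (IsUnit.posDef_star_right_conjugate_iff hdet).mpr (PosDef.diagonal hd)
  rwa [star_eq_conjTranspose, conjTranspose_eq_transpose_of_trivial] at h

end LowerTriangular

theorem eq_zero_on_band_of_transpose_mul {R : Type*} [Ring R] [NoZeroDivisors R]
    {n b : ℕ} {L E : Matrix (Fin n) (Fin n) R} (hdiag : ∀ i, L i i ≠ 0)
    (hL : ∀ k i : Fin n, (k : ℕ) < i ∨ (i : ℕ) + b < k → L k i = 0) (hE : E.IsSymm)
    (h : ∀ i q : Fin n, (i : ℕ) ≤ q → (q : ℕ) ≤ i + b → (Lᵀ * E) i q = 0) :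
    ∀ i q : Fin n, (i : ℕ) ≤ q → (q : ℕ) ≤ i + b → E i q = 0 := by
  intro i
  induction i using WellFoundedGT.induction with
  | _ i ih =>
  have row : ∀ q : Fin n, (i : ℕ) ≤ q → (q : ℕ) ≤ i + b →
      (∀ k : Fin n, (i : ℕ) < k → (k : ℕ) ≤ i + b → E k q = 0) → E i q = 0 := by
    intro q h1 h2 hk
    have hrow := h i q h1 h2
    rw [mul_apply, Fintype.sum_eq_single i fun k hki => ?_] at hrow
    · exact (mul_eq_zero.mp hrow).resolve_left (hdiag i)
    rw [transpose_apply]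
    rcases lt_trichotomy (k : ℕ) i with hlt | heq | hgt
    · rw [hL k i (Or.inl hlt), zero_mul]
    · exact absurd (Fin.ext heq) hki
    · by_cases hkb : (k : ℕ) ≤ i + b
      · rw [hk k hgt hkb, mul_zero]
      · rw [hL k i (Or.inr (by omega)), zero_mul]
  -- `E i i` needs `E k i = E i k` for `k ∈ (i, i + b]`, so the rest of row `i` comes first.
  have off_diag : ∀ q : Fin n, (i : ℕ) < q → (q : ℕ) ≤ i + b → E i q = 0 := by
    intro q h1 h2
    refine row q h1.le h2 fun k hk1 hk2 => ?_
    rcases le_total (k : ℕ) q with hkq | hqk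
    · exact ih k hk1 q hkq (by omega)
    · rw [← hE.apply]
      exact ih q h1 k hqk (by omega)
  intro q h1 h2
  rcases h1.lt_or_eq with hlt | heq
  · exact off_diag q hlt h2
  · obtain rfl := Fin.ext heq
    exact row i le_rfl h2 fun k hk1 hk2 => by rw [← hE.apply]; exact off_diag k hk1 hk2

end Matrix

noncomputable def bandCoef {n : ℕ} (b : ℕ) (H : Matrix (Fin n) (Fin n) ℝ) (j : Fin n) :
    bandIdx n b j → ℝ :=
  (subH b H j)⁻¹ *ᵥ subv b H j

noncomputable def bandSchur {n : ℕ} (b : ℕ) (H : Matrix (Fin n) (Fin n) ℝ) (j : Fin n) : ℝ :=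
  H j j - subv b H j ⬝ᵥ bandCoef b H j

noncomputable def bandL {n : ℕ} (b : ℕ) (H : Matrix (Fin n) (Fin n) ℝ) : Matrix (Fin n) (Fin n) ℝ :=
  of fun i j => if i = j then 1
    else if h : (j : ℕ) < i ∧ (i : ℕ) ≤ j + b then (-bandCoef b H j) ⟨i, h⟩ else 0

noncomputable def bandLDL {n : ℕ} (b : ℕ) (H : Matrix (Fin n) (Fin n) ℝ) :
    Matrix (Fin n) (Fin n) ℝ :=
  bandL b H * diagonal (bandSchur b H)⁻¹ * (bandL b H)ᵀ

section BandedFactor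

variable {n b : ℕ} (H : Matrix (Fin n) (Fin n) ℝ)

theorem bandL_apply_self (j : Fin n) : bandL b H j j = 1 := by
  simp [bandL]

theorem bandL_eq_zero {k j : Fin n} (h : (k : ℕ) < j ∨ (j : ℕ) + b < k) : bandL b H k j = 0 := by
  have hkj : k ≠ j := by rintro rfl; omega
  rw [bandL, of_apply, if_neg hkj, dif_neg (by omega)]

theorem bandL_isLowerTriangular : (bandL b H).IsLowerTriangular :=
  fun _ _ hij => bandL_eq_zero H (Or.inl hij)

theorem bandL_apply_bandIdx {j : Fin n} (k : bandIdx n b j) :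
    bandL b H k.1 j = -bandCoef b H j k := by
  rw [bandL, of_apply, if_neg (Fin.ne_of_val_ne k.2.1.ne'), dif_pos k.2]
  rfl

theorem sum_bandL_mul (j : Fin n) (w : Fin n → ℝ) :
    ∑ k, bandL b H k j * w k = w j + ∑ k : bandIdx n b j, bandL b H k.1 j * w k.1 := by
  rw [← Fintype.sum_subtype_add_sum_subtype (fun k : Fin n => (j : ℕ) < k ∧ (k : ℕ) ≤ j + b),
    add_comm]
  congr 1
  rw [Fintype.sum_eq_single ⟨j, by omega⟩ fun k hk => ?_, bandL_apply_self, one_mul]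
  have hkj : (k.1 : ℕ) ≠ j := fun h => hk (Subtype.ext (Fin.ext h))
  rw [bandL_eq_zero H (by have := k.2; omega), zero_mul]

theorem mul_bandL_apply (i j : Fin n) :
    (H * bandL b H) i j = H i j - ∑ k : bandIdx n b j, H i k.1 * bandCoef b H j k := by
  rw [mul_apply]
  simp_rw [mul_comm (H i _)]
  rw [sum_bandL_mul]
  simp only [bandL_apply_bandIdx, neg_mul, Finset.sum_neg_distrib]
  simp_rw [mul_comm (bandCoef b H j _)]
  ring

theorem mul_bandL_apply_bandIdx {j : Fin n} (hH : IsUnit (subH b H j).det) (i : bandIdx n b j) :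
    (H * bandL b H) i.1 j = 0 := by
  have hsolve : subH b H j *ᵥ bandCoef b H j = subv b H j := by
    rw [bandCoef, mulVec_mulVec, mul_nonsing_inv _ hH, one_mulVec]
  rw [mul_bandL_apply, sub_eq_zero]
  exact (congrFun hsolve i).symm

theorem mul_bandL_apply_self (hsym : H.IsSymm) (j : Fin n) :
    (H * bandL b H) j j = bandSchur b H j := by
  rw [mul_bandL_apply, bandSchur, dotProduct]
  congr 1
  exact Finset.sum_congr rfl fun k _ => by rw [hsym.apply]; rfl

theorem transpose_bandL_mul_apply (hsym : H.IsSymm) (hH : ∀ j, IsUnit (subH b H j).det)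
    {i q : Fin n} (h₁ : (i : ℕ) ≤ q) (h₂ : (q : ℕ) ≤ i + b) :
    ((bandL b H)ᵀ * H) i q = if i = q then bandSchur b H i else 0 := by
  have hHL : (bandL b H)ᵀ * H = (H * bandL b H)ᵀ := by rw [transpose_mul, hsym.eq]
  rw [hHL, transpose_apply]
  rcases h₁.lt_or_eq with hlt | heq
  · rw [if_neg (Fin.ne_of_lt hlt)]
    exact mul_bandL_apply_bandIdx H (hH i) ⟨q, hlt, h₂⟩
  · obtain rfl := Fin.ext heq
    rw [if_pos rfl, mul_bandL_apply_self H hsym]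

theorem bandLDL_apply_eq_zero {i j : Fin n}
    (h : (i : ℕ) + b < j ∨ (j : ℕ) + b < i) : bandLDL b H i j = 0 := by
  rw [bandLDL, mul_apply]
  refine Finset.sum_eq_zero fun l _ => ?_
  rw [mul_diagonal, transpose_apply]
  by_cases hi : (l : ℕ) ≤ i ∧ (i : ℕ) ≤ l + b
  · rw [bandL_eq_zero H (k := j) (by omega), mul_zero]
  · rw [bandL_eq_zero H (by omega), zero_mul, zero_mul]

variable {H}

theorem subH_posDef {j : Fin n}
    (hPD : (H.submatrix (fun k : {k : Fin n // (j : ℕ) ≤ k ∧ (k : ℕ) ≤ j + b} => k.1)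
      (fun k => k.1)).PosDef) :
    (subH b H j).PosDef :=
  hPD.submatrix (e := fun k : bandIdx n b j => ⟨k.1, k.2.1.le, k.2.2⟩)
    fun _ _ h => Subtype.ext (Subtype.mk.inj h)

theorem bandSchur_pos (hsym : H.IsSymm) {j : Fin n}
    (hPD : (H.submatrix (fun k : {k : Fin n // (j : ℕ) ≤ k ∧ (k : ℕ) ≤ j + b} => k.1)
      (fun k => k.1)).PosDef) :
    0 < bandSchur b H j := by
  set v : Fin n → ℝ := fun k => bandL b H k j
  have hquad : v ⬝ᵥ (H *ᵥ v) = bandSchur b H j := by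
    change ∑ k, bandL b H k j * (H * bandL b H) k j = _
    rw [sum_bandL_mul, mul_bandL_apply_self H hsym,
      Finset.sum_eq_zero fun k _ => by
        rw [mul_bandL_apply_bandIdx H (subH_posDef hPD).det_pos.ne'.isUnit, mul_zero],
      add_zero]
  have hv : ∀ k : Fin n, ¬ ((j : ℕ) ≤ k ∧ (k : ℕ) ≤ j + b) → v k = 0 :=
    fun k hk => bandL_eq_zero H (by omega)
  have hv₀ : (fun k : {k : Fin n // (j : ℕ) ≤ k ∧ (k : ℕ) ≤ j + b} => v k) ≠ 0 := fun h0 => by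
    simpa [v, bandL_apply_self] using congrFun h0 ⟨j, le_rfl, Nat.le_add_right _ _⟩
  rw [← hquad, dotProduct_mulVec_eq_submatrix_of_support _ H hv]
  simpa only [star_trivial] using hPD.dotProduct_mulVec_pos hv₀

theorem bandLDL_posDef (hsym : H.IsSymm)
    (hPD : ∀ j : Fin n,
      (H.submatrix (fun k : {k : Fin n // (j : ℕ) ≤ k ∧ (k : ℕ) ≤ j + b} => k.1)
        (fun k => k.1)).PosDef) :
    (bandLDL b H).PosDef :=
  (bandL_isLowerTriangular H).posDef_mul_diagonal_mul_transpose (bandL_apply_self H)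
    fun j => inv_pos.mpr (bandSchur_pos hsym (hPD j))

theorem bandLDL_inv_apply (hsym : H.IsSymm)
    (hPD : ∀ j : Fin n,
      (H.submatrix (fun k : {k : Fin n // (j : ℕ) ≤ k ∧ (k : ℕ) ≤ j + b} => k.1)
        (fun k => k.1)).PosDef)
    {i j : Fin n} (h : ¬ ((i : ℕ) + b < j ∨ (j : ℕ) + b < i)) :
    (bandLDL b H)⁻¹ i j = H i j := by
  have hX : (bandLDL b H).IsSymm :=
    (conjTranspose_eq_transpose_of_trivial _).symm.trans (bandLDL_posDef hsym hPD).1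
  have hE : ((bandLDL b H)⁻¹ - H).IsSymm := hX.inv.sub hsym
  have hzero := eq_zero_on_band_of_transpose_mul (L := bandL b H)
    (fun k => by rw [bandL_apply_self]; exact one_ne_zero) (fun k l hkl => bandL_eq_zero H hkl)
    hE fun k q h₁ h₂ => by
      rw [mul_sub, Matrix.sub_apply, bandLDL,
        (bandL_isLowerTriangular H).transpose_mul_inv_apply_of_le (bandL_apply_self H)
          (fun l => (bandSchur_pos hsym (hPD l)).ne') h₁,
        transpose_bandL_mul_apply H hsym (fun l => (subH_posDef (hPD l)).det_pos.ne'.isUnit) h₁ h₂,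
        sub_self]
  rw [← sub_eq_zero, ← Matrix.sub_apply]
  rcases le_total (i : ℕ) j with hij | hji
  · exact hzero i j hij (by omega)
  · rw [← hE.apply]
    exact hzero j i hji (by omega)

end BandedFactor

theorem banded_logdet_explicit_solution_general {n b : ℕ}
    (H : Matrix (Fin n) (Fin n) ℝ) (hsym : H.IsSymm)
    (hPD : ∀ j : Fin n,
      (H.submatrix
        (fun k : {k : Fin n // (j : ℕ) ≤ (k : ℕ) ∧ (k : ℕ) ≤ (j : ℕ) + b} => k.1)
        (fun k => k.1)).PosDef)
    (L Dm X : Matrix (Fin n) (Fin n) ℝ)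
    (hL : ∀ i j : Fin n, L i j =
      if i = j then 1
      else if h : (j : ℕ) < (i : ℕ) ∧ (i : ℕ) ≤ (j : ℕ) + b then
        (-((subH b H j)⁻¹ *ᵥ subv b H j)) ⟨i, h⟩
      else 0)
    (hD : Dm = Matrix.diagonal (fun j : Fin n =>
      (H j j - subv b H j ⬝ᵥ ((subH b H j)⁻¹ *ᵥ subv b H j))⁻¹))
    (hX : X = L * Dm * Lᵀ) :
    X.PosDef ∧
    (∀ i j : Fin n, ((i : ℕ) + b < (j : ℕ) ∨ (j : ℕ) + b < (i : ℕ)) → X i j = 0) ∧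
    (∀ i j : Fin n, ¬ ((i : ℕ) + b < (j : ℕ) ∨ (j : ℕ) + b < (i : ℕ)) → X⁻¹ i j = H i j) ∧
    (∀ Y : Matrix (Fin n) (Fin n) ℝ, Y.PosDef →
      (∀ i j : Fin n, ((i : ℕ) + b < (j : ℕ) ∨ (j : ℕ) + b < (i : ℕ)) → Y i j = 0) →
      -Real.log X.det + (X * H).trace ≤ -Real.log Y.det + (Y * H).trace) := by
  obtain rfl : L = bandL b H := Matrix.ext hL
  obtain rfl : X = bandLDL b H := hX.trans (by rw [hD]; rfl)
  have hXpd := bandLDL_posDef hsym hPD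
  have hinv : ∀ i j : Fin n, ¬ ((i : ℕ) + b < j ∨ (j : ℕ) + b < i) →
      (bandLDL b H)⁻¹ i j = H i j := fun i j h => bandLDL_inv_apply hsym hPD h
  have htrace : ∀ Y : Matrix (Fin n) (Fin n) ℝ,
      (∀ i j : Fin n, ((i : ℕ) + b < j ∨ (j : ℕ) + b < i) → Y i j = 0) →
      (Y * H).trace = (Y * (bandLDL b H)⁻¹).trace := fun Y hY =>
    trace_mul_eq_of_eq_on_support fun i k hik =>
      (hinv k i fun h => hik (hY i k h.symm)).symm
  refine ⟨hXpd, fun i j => bandLDL_apply_eq_zero H, hinv, fun Y hY hYband => ?_⟩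
  have key := hXpd.inv.log_det_mul_le_trace_mul_sub_card hY
  rw [det_mul, det_nonsing_inv, Ring.inverse_eq_inv',
    Real.log_mul (inv_pos.mpr hXpd.det_pos).ne' hY.det_pos.ne', Real.log_inv,
    trace_mul_comm, Fintype.card_fin] at key
  rw [htrace _ hYband, htrace _ fun i j => bandLDL_apply_eq_zero H,
    mul_nonsing_inv _ hXpd.det_pos.ne'.isUnit, trace_one, Fintype.card_fin]
  linarith

theorem banded_logdet_explicit_solution {n b : ℕ}
    (H : Matrix (Fin n) (Fin n) ℝ) (hsym : H.IsSymm)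
    (hsp : ∀ i j : Fin n, ((i : ℕ) + b < (j : ℕ) ∨ (j : ℕ) + b < (i : ℕ)) → H i j = 0)
    (hPD : ∀ j : Fin n,
      (H.submatrix
        (fun k : {k : Fin n // (j : ℕ) ≤ (k : ℕ) ∧ (k : ℕ) ≤ (j : ℕ) + b} => k.1)
        (fun k => k.1)).PosDef)
    (L Dm X : Matrix (Fin n) (Fin n) ℝ)
    (hL : ∀ i j : Fin n, L i j =
      if i = j then 1
      else if h : (j : ℕ) < (i : ℕ) ∧ (i : ℕ) ≤ (j : ℕ) + b then
        (-((subH b H j)⁻¹ *ᵥ subv b H j)) ⟨i, h⟩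
      else 0)
    (hD : Dm = Matrix.diagonal (fun j : Fin n =>
      (H j j - subv b H j ⬝ᵥ ((subH b H j)⁻¹ *ᵥ subv b H j))⁻¹))
    (hX : X = L * Dm * Lᵀ) :
    X.PosDef ∧
    (∀ i j : Fin n, ((i : ℕ) + b < (j : ℕ) ∨ (j : ℕ) + b < (i : ℕ)) → X i j = 0) ∧
    (∀ i j : Fin n, ¬ ((i : ℕ) + b < (j : ℕ) ∨ (j : ℕ) + b < (i : ℕ)) → X⁻¹ i j = H i j) ∧
    (∀ Y : Matrix (Fin n) (Fin n) ℝ, Y.PosDef →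
      (∀ i j : Fin n, ((i : ℕ) + b < (j : ℕ) ∨ (j : ℕ) + b < (i : ℕ)) → Y i j = 0) →
      -Real.log X.det + (X * H).trace ≤ -Real.log Y.det + (Y * H).trace) :=
  banded_logdet_explicit_solution_general H hsym hPD L Dm X hL hD hX
end

section
/- Let G be the chain graph, H tridiagonal with positive definite 2×2 principal blocks, and let X̂ = argmin_{X ∈ S_n(G)^{++}} D_ld(X, H⁻¹) (equivalently P_G(X̂⁻¹) = H). Then the full inverse satisfies, for i < j: (X̂⁻¹)_{ij} = (H_{i,i+1} H_{i+1,i+2} ⋯ H_{j-1,j}) / (H_{i+1,i+1} ⋯ H_{j-1,j-1}), and (X̂⁻¹)_{ij} = H_{ij} when |i-j| ≤ 1. -/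
open Matrix

/-- Entry of `H` addressed by natural number indices (0 outside the range). -/
noncomputable def entryNat {n : ℕ} (H : Matrix (Fin n) (Fin n) ℝ) (a c : ℕ) : ℝ :=
  if h : a < n ∧ c < n then H ⟨a, h.1⟩ ⟨c, h.2⟩ else 0

namespace TridiagAux

lemma entryNat_eq {n : ℕ} (X : Matrix (Fin n) (Fin n) ℝ) {a c : ℕ} (ha : a < n) (hc : c < n) :
    entryNat X a c = X ⟨a, ha⟩ ⟨c, hc⟩ := dif_pos ⟨ha, hc⟩

lemma entryNat_zero {n : ℕ} (X : Matrix (Fin n) (Fin n) ℝ) {a c : ℕ} (h : ¬ (a < n ∧ c < n)) :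
    entryNat X a c = 0 := dif_neg h

lemma entryNat_symm {n : ℕ} {X : Matrix (Fin n) (Fin n) ℝ} (hX : X.IsHermitian) (a c : ℕ) :
    entryNat X a c = entryNat X c a := by
  by_cases h : a < n ∧ c < n
  · rw [entryNat_eq X h.1 h.2, entryNat_eq X h.2 h.1]
    have := hX.apply ⟨a, h.1⟩ ⟨c, h.2⟩
    simpa using this.symm
  · rw [entryNat_zero X h, entryNat_zero X (by tauto)]

/-- The basic three-term relation coming from `X⁻¹ * X = 1` for a tridiagonal `X`. -/
lemma col_eq {n : ℕ} (X : Matrix (Fin n) (Fin n) ℝ)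
    (hinv : X⁻¹ * X = 1)
    (hXsp : ∀ i j : Fin n, ((i : ℕ) + 1 < (j : ℕ) ∨ (j : ℕ) + 1 < (i : ℕ)) → X i j = 0)
    (a c : ℕ) (ha : a < n) (hc : c < n) (hc0 : 0 < c) (hne : a ≠ c) :
    entryNat X⁻¹ a (c - 1) * entryNat X (c - 1) c + entryNat X⁻¹ a c * entryNat X c c
      + entryNat X⁻¹ a (c + 1) * entryNat X (c + 1) c = 0 := by
  have h0 : (X⁻¹ * X) ⟨a, ha⟩ ⟨c, hc⟩ = 0 := by
    rw [hinv]
    simp [Matrix.one_apply, Fin.ext_iff, hne]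
  rw [Matrix.mul_apply] at h0
  set f : Fin n → ℝ := fun k => X⁻¹ ⟨a, ha⟩ k * X k ⟨c, hc⟩ with hf
  have hzero : ∀ k : Fin n, ¬ ((k : ℕ) = c - 1 ∨ (k : ℕ) = c ∨ (k : ℕ) = c + 1) → f k = 0 := by
    intro k hk
    simp only [not_or] at hk
    have hfar : (k : ℕ) + 1 < c ∨ c + 1 < (k : ℕ) := by omega
    have : X k ⟨c, hc⟩ = 0 := hXsp k ⟨c, hc⟩ hfar
    simp [hf, this]
  by_cases hc1 : c + 1 < n
  · have hsub : ∑ k : Fin n, f k =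
        ∑ k ∈ ({⟨c - 1, by omega⟩, ⟨c, hc⟩, ⟨c + 1, hc1⟩} : Finset (Fin n)), f k := by
      refine (Finset.sum_subset (Finset.subset_univ _) ?_).symm
      intro k _ hk
      apply hzero
      intro hcontra
      apply hk
      simp only [Finset.mem_insert, Finset.mem_singleton, Fin.ext_iff]
      exact hcontra
    rw [hsub] at h0
    rw [Finset.sum_insert (by
          simp only [Finset.mem_insert, Finset.mem_singleton, Fin.ext_iff, Fin.val_mk]; omega),
        Finset.sum_insert (by
          simp only [Finset.mem_singleton, Fin.ext_iff, Fin.val_mk]; omega),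
        Finset.sum_singleton] at h0
    rw [entryNat_eq X⁻¹ ha (show c - 1 < n by omega), entryNat_eq X (show c - 1 < n by omega) hc,
        entryNat_eq X⁻¹ ha hc, entryNat_eq X hc hc,
        entryNat_eq X⁻¹ ha hc1, entryNat_eq X hc1 hc]
    simp only [hf] at h0
    linarith [h0]
  · have hsub : ∑ k : Fin n, f k =
        ∑ k ∈ ({⟨c - 1, by omega⟩, ⟨c, hc⟩} : Finset (Fin n)), f k := by
      refine (Finset.sum_subset (Finset.subset_univ _) ?_).symm
      intro k _ hk
      apply hzero
      intro hcontra
      apply hk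
      simp only [Finset.mem_insert, Finset.mem_singleton, Fin.ext_iff]
      rcases hcontra with h | h | h
      · exact Or.inl h
      · exact Or.inr h
      · exfalso; omega
    rw [hsub] at h0
    rw [Finset.sum_insert (by
          simp only [Finset.mem_singleton, Fin.ext_iff, Fin.val_mk]; omega),
        Finset.sum_singleton] at h0
    rw [entryNat_eq X⁻¹ ha (show c - 1 < n by omega), entryNat_eq X (show c - 1 < n by omega) hc,
        entryNat_eq X⁻¹ ha hc, entryNat_eq X hc hc,
        entryNat_zero X (by omega)]
    simp only [hf] at h0
    linarith [h0]

/-- If a symmetric tridiagonal matrix has a zero off-diagonal entry, its inverse vanishes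
across the corresponding cut. -/
lemma decouple {n : ℕ} (X : Matrix (Fin n) (Fin n) ℝ) (hPD : X.PosDef)
    (hXsp : ∀ i j : Fin n, ((i : ℕ) + 1 < (j : ℕ) ∨ (j : ℕ) + 1 < (i : ℕ)) → X i j = 0)
    (m : ℕ) (hm : m + 1 < n) (hz : entryNat X m (m + 1) = 0)
    (a b : ℕ) (han : a < n) (hbn : b < n) (ham : a ≤ m) (hmb : m < b) :
    entryNat X⁻¹ a b = 0 := by
  have hdet : IsUnit X.det := isUnit_iff_ne_zero.mpr hPD.det_pos.ne'
  have hinv1 : X * X⁻¹ = 1 := Matrix.mul_nonsing_inv _ hdet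
  have hinv2 : X⁻¹ * X = 1 := Matrix.nonsing_inv_mul _ hdet
  set d : Fin n → ℝ := fun k => if (k : ℕ) ≤ m then 1 else 0 with hd
  set P : Matrix (Fin n) (Fin n) ℝ := Matrix.diagonal d with hP
  have hcross : ∀ i j : Fin n, ((i : ℕ) ≤ m ∧ m < (j : ℕ)) ∨ ((j : ℕ) ≤ m ∧ m < (i : ℕ)) →
      X i j = 0 := by
    intro i j hij
    by_cases hfar : ((i : ℕ) + 1 < (j : ℕ) ∨ (j : ℕ) + 1 < (i : ℕ))
    · exact hXsp i j hfar
    · -- adjacent crossing: {i,j} = {m, m+1}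
      have hzX : X ⟨m, by omega⟩ ⟨m + 1, hm⟩ = 0 := by
        rw [entryNat_eq X (by omega) hm] at hz
        exact hz
      rcases hij with ⟨h1, h2⟩ | ⟨h1, h2⟩
      · have hi : (i : ℕ) = m := by omega
        have hj : (j : ℕ) = m + 1 := by omega
        calc X i j = X ⟨m, by omega⟩ ⟨m + 1, hm⟩ := by
              congr 1 <;> (apply Fin.ext; simp [hi, hj])
          _ = 0 := hzX
      · have hi : (i : ℕ) = m + 1 := by omega
        have hj : (j : ℕ) = m := by omega
        have hX' : X i j = X j i := by
          rw [← hPD.1.apply i j]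
          exact star_trivial _
        rw [hX']
        calc X j i = X ⟨m, by omega⟩ ⟨m + 1, hm⟩ := by
              congr 1 <;> (apply Fin.ext; simp [hi, hj])
          _ = 0 := hzX
  have hcomm : P * X = X * P := by
    ext i j
    rw [hP, Matrix.diagonal_mul, Matrix.mul_diagonal]
    by_cases hi : (i : ℕ) ≤ m <;> by_cases hj : (j : ℕ) ≤ m
    · simp [hd, hi, hj]
    · have : X i j = 0 := hcross i j (Or.inl ⟨hi, by omega⟩)
      simp [hd, hi, hj, this]
    · have : X i j = 0 := hcross i j (Or.inr ⟨hj, by omega⟩)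
      simp [hd, hi, hj, this]
    · simp [hd, hi, hj]
  have hcomm' : P * X⁻¹ = X⁻¹ * P := by
    calc P * X⁻¹ = 1 * (P * X⁻¹) := by rw [one_mul]
    _ = X⁻¹ * (X * P) * X⁻¹ := by rw [← hinv2]; noncomm_ring
    _ = X⁻¹ * (P * X) * X⁻¹ := by rw [hcomm]
    _ = X⁻¹ * P * (X * X⁻¹) := by noncomm_ring
    _ = X⁻¹ * P := by rw [hinv1, mul_one]
  have h1 : (P * X⁻¹) ⟨a, han⟩ ⟨b, hbn⟩ = X⁻¹ ⟨a, han⟩ ⟨b, hbn⟩ := by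
    rw [hP, Matrix.diagonal_mul]
    simp [hd, ham]
  have h2 : (X⁻¹ * P) ⟨a, han⟩ ⟨b, hbn⟩ = 0 := by
    rw [hP, Matrix.mul_diagonal]
    simp [hd]
    intro h
    omega
  rw [entryNat_eq X⁻¹ han hbn, ← h1, hcomm', h2]

end TridiagAux

open TridiagAux in
theorem tridiag_logdet_inverse_entries {n : ℕ}
    (H Xhat : Matrix (Fin n) (Fin n) ℝ) (hsym : H.IsSymm)
    (hsp : ∀ i j : Fin n, ((i : ℕ) + 1 < (j : ℕ) ∨ (j : ℕ) + 1 < (i : ℕ)) → H i j = 0)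
    (hdiag : ∀ i, 0 < H i i)
    (h2x2 : ∀ (i : Fin n) (h : (i : ℕ) + 1 < n),
      0 < H i i * H ⟨(i : ℕ) + 1, h⟩ ⟨(i : ℕ) + 1, h⟩ - (H ⟨(i : ℕ) + 1, h⟩ i) ^ 2)
    (hXPD : Xhat.PosDef)
    (hXsp : ∀ i j : Fin n, ((i : ℕ) + 1 < (j : ℕ) ∨ (j : ℕ) + 1 < (i : ℕ)) → Xhat i j = 0)
    (hopt : ∀ i j : Fin n, ¬ ((i : ℕ) + 1 < (j : ℕ) ∨ (j : ℕ) + 1 < (i : ℕ)) →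
      Xhat⁻¹ i j = H i j) :
    (∀ i j : Fin n, (i : ℕ) < (j : ℕ) →
      Xhat⁻¹ i j =
        (∏ k ∈ Finset.Ico (i : ℕ) (j : ℕ), entryNat H k (k + 1)) /
        (∏ k ∈ Finset.Ico ((i : ℕ) + 1) (j : ℕ), entryNat H k k)) ∧
    (∀ i j : Fin n, ¬ ((i : ℕ) + 1 < (j : ℕ) ∨ (j : ℕ) + 1 < (i : ℕ)) →
      Xhat⁻¹ i j = H i j) := by
  have hdet : IsUnit Xhat.det := isUnit_iff_ne_zero.mpr hXPD.det_pos.ne'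
  have hinv2 : Xhat⁻¹ * Xhat = 1 := Matrix.nonsing_inv_mul _ hdet
  have hSherm : (Xhat⁻¹).IsHermitian := hXPD.1.inv
  -- ℕ-indexed versions of `hopt`
  have hoptd : ∀ a : ℕ, a < n → entryNat Xhat⁻¹ a a = entryNat H a a := by
    intro a ha
    rw [entryNat_eq Xhat⁻¹ ha ha, entryNat_eq H ha ha]
    exact hopt _ _ (by simp)
  have hopts : ∀ a : ℕ, a + 1 < n → entryNat Xhat⁻¹ a (a + 1) = entryNat H a (a + 1) := by
    intro a ha
    rw [entryNat_eq Xhat⁻¹ (by omega) ha, entryNat_eq H (by omega) ha]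
    exact hopt _ _ (by simp; omega)
  -- Key identity: 2×2 minor of the inverse vanishes
  have keyA : ∀ p q : ℕ, p + 1 < q → q < n →
      entryNat Xhat⁻¹ p q * entryNat Xhat⁻¹ (q - 1) (q - 1) = entryNat Xhat⁻¹ p (q - 1) * entryNat Xhat⁻¹ (q - 1) q := by
    intro p q hpq hq
    set r : ℕ := q - 1 with hr
    have hrq : r + 1 = q := by omega
    have chain : ∀ d k, n ≤ k + d → r ≤ k →
        entryNat Xhat k (k + 1) * (entryNat Xhat⁻¹ p k * entryNat Xhat⁻¹ r (k + 1) - entryNat Xhat⁻¹ p (k + 1) * entryNat Xhat⁻¹ r k) = 0 := by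
      intro d
      induction d with
      | zero =>
        intro k hk _
        have : entryNat Xhat k (k + 1) = 0 := entryNat_zero Xhat (by omega)
        rw [this]; ring
      | succ d ih =>
        intro k hk hrk
        by_cases hkn : k + 1 < n
        · have eqA := col_eq Xhat hinv2 hXsp p (k + 1) (by omega) hkn (by omega) (by omega)
          have eqB := col_eq Xhat hinv2 hXsp r (k + 1) (by omega) hkn (by omega) (by omega)
          have hk1 : k + 1 - 1 = k := by omega
          rw [hk1] at eqA eqB
          rw [entryNat_symm hXPD.1 (k + 1 + 1) (k + 1)] at eqA eqB
          have ihk := ih (k + 1) (by omega) (by omega)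
          linear_combination entryNat Xhat⁻¹ r (k + 1) * eqA -
            entryNat Xhat⁻¹ p (k + 1) * eqB + ihk
        · have h1 : entryNat Xhat⁻¹ p (k + 1) = 0 := entryNat_zero Xhat⁻¹ (by omega)
          have h2 : entryNat Xhat⁻¹ r (k + 1) = 0 := entryNat_zero Xhat⁻¹ (by omega)
          rw [h1, h2]; ring
    have hW := chain n r (by omega) le_rfl
    rw [hrq] at hW
    by_cases hTz : entryNat Xhat r q = 0
    · have hz : entryNat Xhat r (r + 1) = 0 := by rw [hrq]; exact hTz
      have h1 : entryNat Xhat⁻¹ p q = 0 := by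
        exact decouple Xhat hXPD hXsp r (by omega) hz p q (by omega) hq (by omega) (by omega)
      have h2 : entryNat Xhat⁻¹ r q = 0 := by
        exact decouple Xhat hXPD hXsp r (by omega) hz r q (by omega) hq (by omega) (by omega)
      rw [h1, h2]; ring
    · rcases mul_eq_zero.mp hW with h | h
      · exact absurd h hTz
      · linarith [h]
  -- Main product identity by induction
  have key : ∀ i j : ℕ, i + 1 ≤ j → j < n →
      entryNat Xhat⁻¹ i j * ∏ k ∈ Finset.Ico (i + 1) j, entryNat H k k =
        ∏ k ∈ Finset.Ico i j, entryNat H k (k + 1) := by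
    intro i j hij
    induction j, hij using Nat.le_induction with
    | base =>
      intro hn
      rw [Finset.Ico_self, Finset.prod_empty, mul_one, Nat.Ico_succ_singleton,
        Finset.prod_singleton]
      exact hopts i hn
    | succ j hij ih =>
      intro hn
      have ihj := ih (by omega)
      have hA := keyA i (j + 1) (by omega) hn
      simp only [Nat.add_sub_cancel] at hA
      rw [hoptd j (by omega), hopts j hn] at hA
      rw [Finset.prod_Ico_succ_top (by omega), Finset.prod_Ico_succ_top (by omega)]
      linear_combination (∏ k ∈ Finset.Ico (i + 1) j, entryNat H k k) * hA +
        entryNat H j (j + 1) * ihj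
  constructor
  · intro i j hij
    have hD : 0 < ∏ k ∈ Finset.Ico ((i : ℕ) + 1) (j : ℕ), entryNat H k k := by
      apply Finset.prod_pos
      intro k hk
      have hkn : k < n := by
        have := (Finset.mem_Ico.mp hk).2
        omega
      rw [entryNat_eq H hkn hkn]
      exact hdiag _
    rw [eq_div_iff hD.ne']
    have hXij : Xhat⁻¹ i j = entryNat Xhat⁻¹ (i : ℕ) (j : ℕ) := by
      rw [entryNat_eq Xhat⁻¹ i.isLt j.isLt]
    rw [hXij]
    exact key (i : ℕ) (j : ℕ) (by omega) j.isLt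
  · exact hopt
end

section
/- Let H be tridiagonal with positive diagonal, β = max_{i∈[n-1]} |H_{i,i+1}|/√(H_{ii}H_{i+1,i+1}) < 1, and X the tridiagonal LogDet preconditioner satisfying P_G(X⁻¹) = H. Then for any y ∈ ℝⁿ, yᵀX⁻¹y ≤ ‖y‖₂² · ‖diag(H)‖₂ · (1+β)/(1-β). -/
/-!
Let `M = X⁻¹`. Since `X` is tridiagonal and positive definite, `M` is semiseparable: for `i ≤ p`
and `j = p + 1`, `M i j * M p p = M i p * M p j`. Indeed, if `c * M p p = M p j`, the vector
`v = M (eⱼ - c eₚ)` vanishes at `p`, so by tridiagonality its truncation to the indices below `p`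
is mapped by `X` to `eⱼ - c eₚ = 0` on those indices; positive definiteness forces the truncation
to vanish. Inducting along the band gives `|M i j| ≤ β ^ |i - j| * √(M i i * M j j)`, since
`P_G(X⁻¹) = H` identifies the diagonal and adjacent entries of `M` with those of `H`. Schur's test
with the kernel `β ^ |i - j|`, whose row sums are below `(1 + β) / (1 - β)`, then bounds `yᵀ M y`
by `(1 + β) / (1 - β) * ∑ i, M i i * y i ^ 2`.
-/

open Matrix

theorem sum_pow_dist_le {b : ℝ} (hb0 : 0 ≤ b) (hb1 : b < 1) {n : ℕ} (i : Fin n) :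
    ∑ j : Fin n, b ^ Nat.dist i j ≤ (1 + b) / (1 - b) := by
  rw [Fin.sum_univ_eq_sum_range (fun j => b ^ Nat.dist (i : ℕ) j),
    ← Finset.sum_range_add_sum_Ico _ i.isLt.le]
  have hbelow :
      ∑ j ∈ Finset.range i, b ^ Nat.dist i j = ∑ k ∈ Finset.Ico 1 ((i : ℕ) + 1), b ^ k := by
    rw [← Finset.sum_range_reflect, Finset.sum_Ico_eq_sum_range]
    refine Finset.sum_congr (by simp) fun k hk => ?_
    rw [Finset.mem_range] at hk
    rw [Nat.dist_eq_sub_of_le_right (by omega)]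
    congr 1
    omega
  have habove :
      ∑ j ∈ Finset.Ico (i : ℕ) n, b ^ Nat.dist i j = ∑ k ∈ Finset.Ico 0 (n - i), b ^ k := by
    rw [Finset.sum_Ico_eq_sum_range, Finset.sum_Ico_eq_sum_range]
    refine Finset.sum_congr rfl fun k _ => ?_
    rw [Nat.dist_eq_sub_of_le (by omega)]
    congr 1
    omega
  rw [hbelow, habove, add_div, add_comm (1 / (1 - b))]
  gcongr
  · simpa using geom_sum_Ico_le_of_lt_one (m := 1) hb0 hb1
  · simpa using geom_sum_Ico_le_of_lt_one (m := 0) hb0 hb1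

namespace Matrix

variable {ι : Type*} [Fintype ι] {n : ℕ}

theorem PosDef.eq_zero_of_mulVec_eq_zero_on {R : Type*} [Ring R] [PartialOrder R] [StarRing R]
    {A : Matrix ι ι R} (hA : A.PosDef) {u : ι → R} (s : Set ι)
    (hu : ∀ i ∉ s, u i = 0) (hAu : ∀ i ∈ s, (A *ᵥ u) i = 0) : u = 0 := by
  by_contra hne
  refine (hA.dotProduct_mulVec_pos hne).ne' (Finset.sum_eq_zero fun i _ => ?_)
  by_cases hi : i ∈ s
  · simp [hAu i hi]
  · simp [hu i hi]

theorem dotProduct_mulVec_le_of_isSymm {K : Matrix ι ι ℝ}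
    (hK0 : ∀ i j, 0 ≤ K i j) (hK : K.IsSymm) {c : ℝ} (hrow : ∀ i, ∑ j, K i j ≤ c)
    (z : ι → ℝ) :
    z ⬝ᵥ (K *ᵥ z) ≤ c * ∑ i, z i ^ 2 := by
  have hswap : ∑ i, ∑ j, K i j * z j ^ 2 = ∑ i, ∑ j, K i j * z i ^ 2 := by
    rw [Finset.sum_comm]
    simp only [hK.apply]
  calc z ⬝ᵥ (K *ᵥ z) = ∑ i, ∑ j, K i j * (z i * z j) := by
        simp only [dotProduct, mulVec, Finset.mul_sum]
        exact Finset.sum_congr rfl fun i _ => Finset.sum_congr rfl fun j _ => by ring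
    _ ≤ ∑ i, ∑ j, K i j * ((z i ^ 2 + z j ^ 2) / 2) := by
        gcongr with i _ j _
        · exact hK0 i j
        · linarith [two_mul_le_add_sq (z i) (z j)]
    _ = (∑ i, ∑ j, K i j * z i ^ 2 + ∑ i, ∑ j, K i j * z j ^ 2) / 2 := by
        simp only [mul_add, add_div, Finset.sum_add_distrib, Finset.sum_div, mul_div_assoc]
    _ = ∑ i, z i ^ 2 * ∑ j, K i j := by
        rw [hswap, add_self_div_two]
        exact Finset.sum_congr rfl fun i _ => by rw [Finset.mul_sum]; simp only [mul_comm]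
    _ ≤ ∑ i, z i ^ 2 * c := by gcongr with i; exact hrow i
    _ = c * ∑ i, z i ^ 2 := by rw [← Finset.sum_mul, mul_comm]

theorem dotProduct_mulVec_le_of_abs_le {A K : Matrix ι ι ℝ}
    (hK0 : ∀ i j, 0 ≤ K i j) (hK : K.IsSymm) {c : ℝ} (hrow : ∀ i, ∑ j, K i j ≤ c)
    {w : ι → ℝ} (hA : ∀ i j, |A i j| ≤ K i j * (w i * w j)) (y : ι → ℝ) :
    y ⬝ᵥ (A *ᵥ y) ≤ c * ∑ i, (w i * y i) ^ 2 := by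
  set z := fun i => |w i * y i|
  have hterm : ∀ i j, y i * (A i j * y j) ≤ K i j * (z i * z j) := fun i j => calc
    y i * (A i j * y j) ≤ |A i j| * (|y i| * |y j|) := by
        rw [← abs_mul, ← abs_mul]
        exact (le_abs_self _).trans_eq (by ring_nf)
    _ ≤ K i j * (w i * w j) * (|y i| * |y j|) := by gcongr; exact hA i j
    _ ≤ K i j * (|w i * w j| * (|y i| * |y j|)) := by
        rw [mul_assoc]
        gcongr
        exacts [hK0 i j, le_abs_self _]
    _ = K i j * (z i * z j) := by
        simp only [z, abs_mul]
        ring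
  calc y ⬝ᵥ (A *ᵥ y) ≤ z ⬝ᵥ (K *ᵥ z) := by
        simp only [dotProduct, mulVec, Finset.mul_sum]
        exact Finset.sum_le_sum fun i _ => Finset.sum_le_sum fun j _ => by
          linarith [hterm i j]
    _ ≤ c * ∑ i, z i ^ 2 := dotProduct_mulVec_le_of_isSymm hK0 hK hrow z
    _ = c * ∑ i, (w i * y i) ^ 2 := by simp only [z, sq_abs]

def IsTridiagonal {α : Type*} [Zero α] (A : Matrix (Fin n) (Fin n) α) : Prop :=
  ∀ i j : Fin n, (i : ℕ) + 1 < j ∨ (j : ℕ) + 1 < i → A i j = 0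

theorem inv_apply_mul_inv_apply_self_of_isTridiagonal {X : Matrix (Fin n) (Fin n) ℝ}
    (hX : X.PosDef) (hXt : X.IsTridiagonal) {i p j : Fin n} (hip : i ≤ p)
    (hpj : (p : ℕ) + 1 = j) :
    X⁻¹ i j * X⁻¹ p p = X⁻¹ i p * X⁻¹ p j := by
  obtain hip | rfl := hip.lt_or_eq
  swap
  · ring
  set M := X⁻¹
  have hMpp : M p p ≠ 0 := hX.inv.diag_pos.ne'
  have hXM : X * M = 1 := X.mul_nonsing_inv ((X.isUnit_iff_isUnit_det).mp hX.isUnit)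
  obtain ⟨c, hc⟩ : ∃ c, c * M p p = M p j := ⟨M p j / M p p, div_mul_cancel₀ _ hMpp⟩
  set v := M *ᵥ (Pi.single j 1 - Pi.single p c)
  have hv : ∀ l, v l = M l j - c * M l p := fun l => by simp [v, mulVec_sub]
  have hvp : v p = 0 := by rw [hv, hc, sub_self]
  have hXv : ∀ l < p, (X *ᵥ v) l = 0 := fun l hl => by
    rw [mulVec_mulVec, hXM, one_mulVec, Pi.sub_apply, Pi.single_eq_of_ne (by omega),
      Pi.single_eq_of_ne hl.ne, sub_zero]
  have hu : (Set.Iio p).indicator v = 0 := by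
    refine hX.eq_zero_of_mulVec_eq_zero_on (Set.Iio p) (fun l hl => Set.indicator_of_notMem hl _)
      fun l hl => ?_
    rw [← hXv l hl]
    simp only [mulVec, dotProduct]
    refine Finset.sum_congr rfl fun m _ => ?_
    rcases lt_trichotomy m p with hm | rfl | hm
    · rw [Set.indicator_of_mem (Set.mem_Iio.mpr hm)]
    · rw [Set.indicator_of_notMem Set.self_notMem_Iio, hvp]
    · have hl : (l : ℕ) < p := hl
      rw [hXt l m (Or.inl (by omega)), zero_mul, zero_mul]
  have hvi : M i j = c * M i p := by
    simpa [hip, hv, sub_eq_zero] using congr_fun hu i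
  rw [hvi, ← hc]
  ring

theorem abs_inv_apply_le_pow_dist_of_isTridiagonal {X : Matrix (Fin n) (Fin n) ℝ}
    (hX : X.PosDef) (hXt : X.IsTridiagonal) {b : ℝ}
    (hb : ∀ p j : Fin n, (p : ℕ) + 1 = j → |X⁻¹ p j| ≤ b * (√(X⁻¹ p p) * √(X⁻¹ j j)))
    (i j : Fin n) :
    |X⁻¹ i j| ≤ b ^ Nat.dist i j * (√(X⁻¹ i i) * √(X⁻¹ j j)) := by
  set M := X⁻¹
  have hdiag : ∀ p, 0 < M p p := fun p => hX.inv.diag_pos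
  wlog hij : i ≤ j generalizing i j
  · have hsymm : M j i = M i j := by simpa using hX.inv.isHermitian.apply i j
    simpa [Nat.dist_comm, hsymm, mul_comm] using this j i (le_of_not_ge hij)
  obtain ⟨k, hk⟩ := Nat.exists_eq_add_of_le (Fin.le_def.mp hij)
  rw [hk, Nat.dist_eq_sub_of_le (by omega), Nat.add_sub_cancel_left]
  induction k generalizing j with
  | zero =>
    obtain rfl : i = j := Fin.ext (by omega)
    rw [pow_zero, one_mul, Real.mul_self_sqrt (hdiag i).le, abs_of_pos (hdiag i)]
  | succ k ih =>
    set p : Fin n := ⟨i + k, by omega⟩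
    have hpj : (p : ℕ) + 1 = j := by simp [p]; omega
    have hMij : M i j = M i p * M p j / M p p := by
      rw [eq_div_iff (hdiag p).ne', inv_apply_mul_inv_apply_self_of_isTridiagonal hX hXt
        (Fin.le_def.mpr (by simp [p])) hpj]
    have hsq : √(M p p) * √(M p p) = M p p := Real.mul_self_sqrt (hdiag p).le
    calc |M i j| = |M i p| * |M p j| / M p p := by
          rw [hMij, abs_div, abs_mul, abs_of_pos (hdiag p)]
      _ ≤ (b ^ k * (√(M i i) * √(M p p))) * (b * (√(M p p) * √(M j j))) / M p p := by
          have hip := ih p (Fin.le_def.mpr (by simp [p])) rfl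
          exact div_le_div_of_nonneg_right (mul_le_mul hip (hb p j hpj) (abs_nonneg _)
            (hip.trans' (abs_nonneg _))) (hdiag p).le
      _ = b ^ (k + 1) * (√(M i i) * √(M j j)) * (√(M p p) * √(M p p)) / M p p := by ring
      _ = b ^ (k + 1) * (√(M i i) * √(M j j)) := by
          rw [hsq, mul_div_cancel_right₀ _ (hdiag p).ne']

theorem dotProduct_inv_mulVec_le_of_isTridiagonal {X : Matrix (Fin n) (Fin n) ℝ}
    (hX : X.PosDef) (hXt : X.IsTridiagonal) {b : ℝ} (hb0 : 0 ≤ b) (hb1 : b < 1)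
    (hb : ∀ p j : Fin n, (p : ℕ) + 1 = j → |X⁻¹ p j| ≤ b * (√(X⁻¹ p p) * √(X⁻¹ j j)))
    (y : Fin n → ℝ) :
    y ⬝ᵥ (X⁻¹ *ᵥ y) ≤ (1 + b) / (1 - b) * ∑ i, X⁻¹ i i * y i ^ 2 := by
  have hK : (of fun i j : Fin n => b ^ Nat.dist i j).IsSymm :=
    IsSymm.ext fun i j => by simp [Nat.dist_comm]
  calc y ⬝ᵥ (X⁻¹ *ᵥ y) ≤ (1 + b) / (1 - b) * ∑ i, (√(X⁻¹ i i) * y i) ^ 2 :=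
        dotProduct_mulVec_le_of_abs_le (fun _ _ => pow_nonneg hb0 _) hK (sum_pow_dist_le hb0 hb1)
          (abs_inv_apply_le_pow_dist_of_isTridiagonal hX hXt hb) y
    _ = (1 + b) / (1 - b) * ∑ i, X⁻¹ i i * y i ^ 2 := by
        simp only [mul_pow, Real.sq_sqrt hX.inv.diag_pos.le]

end Matrix

theorem tridiag_inverse_quadratic_form_bound {n : ℕ} (hn : 1 < n)
    (H X : Matrix (Fin n) (Fin n) ℝ)
    (hXPD : X.PosDef)
    (hXsp : ∀ i j : Fin n, ((i : ℕ) + 1 < (j : ℕ) ∨ (j : ℕ) + 1 < (i : ℕ)) → X i j = 0)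
    (hopt : ∀ i j : Fin n, ¬ ((i : ℕ) + 1 < (j : ℕ) ∨ (j : ℕ) + 1 < (i : ℕ)) →
      X⁻¹ i j = H i j)
    (β : ℝ)
    (hβdef : β = Finset.univ.sup'
      (Finset.univ_nonempty_iff.mpr ⟨⟨0, by omega⟩⟩)
      (fun i : Fin (n - 1) =>
        |H ⟨i.1 + 1, by have := i.isLt; omega⟩ ⟨i.1, by have := i.isLt; omega⟩| /
          Real.sqrt (H ⟨i.1, by have := i.isLt; omega⟩ ⟨i.1, by have := i.isLt; omega⟩ *
            H ⟨i.1 + 1, by have := i.isLt; omega⟩ ⟨i.1 + 1, by have := i.isLt; omega⟩)))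
    (hβlt : β < 1)
    (y : Fin n → ℝ) :
    y ⬝ᵥ (X⁻¹ *ᵥ y) ≤
      (∑ i, (y i) ^ 2) *
        (Finset.univ.sup' (Finset.univ_nonempty_iff.mpr ⟨⟨0, by omega⟩⟩)
          (fun i : Fin n => H i i)) *
        ((1 + β) / (1 - β)) := by
  set M := X⁻¹
  have hdiag : ∀ i, M i i = H i i := fun i => hopt i i (by omega)
  have hMpos : ∀ i, 0 < M i i := fun i => hXPD.inv.diag_pos
  have hβ0 : 0 ≤ β := by
    rw [hβdef]
    exact Finset.le_sup'_of_le _ (Finset.mem_univ ⟨0, by omega⟩) (by positivity)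
  have hadj : ∀ p j : Fin n, (p : ℕ) + 1 = j → |M p j| ≤ β * (√(M p p) * √(M j j)) := by
    rintro p j hpj
    have hcorr := hβdef ▸ Finset.le_sup' _ (Finset.mem_univ (⟨p, by omega⟩ : Fin (n - 1)))
    simp only [show (⟨p + 1, _⟩ : Fin n) = j from Fin.ext hpj] at hcorr
    have hsymm : M j p = M p j := by simpa using hXPD.inv.isHermitian.apply p j
    rw [← Real.sqrt_mul (hMpos p).le,
      ← div_le_iff₀ (Real.sqrt_pos.mpr (mul_pos (hMpos p) (hMpos j))), ← hsymm,
      hopt j p (by omega), hdiag, hdiag]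
    exact hcorr
  calc y ⬝ᵥ (M *ᵥ y) ≤ (1 + β) / (1 - β) * ∑ i, M i i * y i ^ 2 :=
        dotProduct_inv_mulVec_le_of_isTridiagonal hXPD hXsp hβ0 hβlt hadj y
    _ ≤ _ := by
        rw [mul_comm]
        gcongr ?_ * _
        rw [Finset.sum_mul]
        refine Finset.sum_le_sum fun i _ => ?_
        rw [hdiag, mul_comm]
        exact mul_le_mul_of_nonneg_left (Finset.le_sup' (fun i => H i i) (Finset.mem_univ i))
          (sq_nonneg _)
end

section
/- Let H_t = ε I + Σ_{s=1}^t g_s g_sᵀ/λ_s with ε = ε̂ G_∞ √T, λ_s = G_∞√s, ‖g_s‖_∞ ≤ G_∞, and define β = max_{t ≤ T} max_{i} |( H_t)_{i,i+1}|/√((H_t)_{ii}(H_t)_{i+1,i+1}). Then 1/(1-β) ≤ 8/ε̂². -/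
open Matrix

private lemma sum_inv_sqrt_le (t : ℕ) :
    ∑ s ∈ Finset.Icc 1 t, (Real.sqrt s)⁻¹ ≤ 2 * Real.sqrt t := by
  induction t with
  | zero => simp
  | succ m ih =>
    rw [Finset.sum_Icc_succ_top (by omega)]
    have h1 : Real.sqrt m ^ 2 = (m : ℝ) := Real.sq_sqrt (by positivity)
    have h2 : Real.sqrt (m + 1 : ℕ) ^ 2 = ((m : ℝ) + 1) := by
      push_cast; exact Real.sq_sqrt (by positivity)
    have h3 : (0:ℝ) ≤ Real.sqrt m := Real.sqrt_nonneg _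
    have h4 : (0:ℝ) < Real.sqrt (m + 1 : ℕ) := by
      rw [Real.sqrt_pos]; push_cast; positivity
    have key : (Real.sqrt (m + 1 : ℕ))⁻¹ ≤
        2 * Real.sqrt (m + 1 : ℕ) - 2 * Real.sqrt m := by
      rw [inv_eq_one_div, div_le_iff₀ h4]
      nlinarith [sq_nonneg (Real.sqrt (m + 1 : ℕ) - Real.sqrt m)]
    linarith

set_option maxHeartbeats 1000000

theorem one_sub_beta_inv_bound {n T : ℕ}
    (g : ℕ → (Fin n → ℝ)) (G εhat : ℝ)
    (hG : 0 < G) (hεhat0 : 0 < εhat) (hεhat1 : εhat ≤ 1)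
    (hbound : ∀ s i, |g s i| ≤ G)
    (Hm : ℕ → Matrix (Fin n) (Fin n) ℝ)
    (hHm : ∀ t, Hm t =
      (εhat * G * Real.sqrt T) • (1 : Matrix (Fin n) (Fin n) ℝ) +
        ∑ s ∈ Finset.Icc 1 t, (G * Real.sqrt s)⁻¹ • Matrix.vecMulVec (g s) (g s)) :
    ∀ t ∈ Finset.Icc 1 T, ∀ (i : Fin n) (h : (i : ℕ) + 1 < n),
      1 / (1 - |Hm t ⟨(i : ℕ) + 1, h⟩ i| /
        Real.sqrt (Hm t i i * Hm t ⟨(i : ℕ) + 1, h⟩ ⟨(i : ℕ) + 1, h⟩)) ≤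
      8 / εhat ^ 2 := by
  intro t ht i h
  obtain ⟨ht1, ht2⟩ := Finset.mem_Icc.mp ht
  set j : Fin n := ⟨(i : ℕ) + 1, h⟩ with hj
  have hT1 : 1 ≤ T := le_trans ht1 ht2
  have hsT : 1 ≤ Real.sqrt T := by
    rw [show (1:ℝ) = Real.sqrt 1 by simp]
    exact Real.sqrt_le_sqrt (by exact_mod_cast hT1)
  have hP : (0:ℝ) < G * Real.sqrt T := by positivity
  set ε : ℝ := εhat * G * Real.sqrt T with hεdef
  set M : ℝ := 2 * (G * Real.sqrt T) with hMdef
  have hε : 0 < ε := by rw [hεdef]; positivity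
  have hM : 0 < M := by rw [hMdef]; positivity
  have hji : j ≠ i := by
    simp [hj, Fin.ext_iff]
  -- entry computations
  have hdiag : ∀ k : Fin n, Hm t k k =
      ε + ∑ s ∈ Finset.Icc 1 t, (G * Real.sqrt s)⁻¹ * (g s k * g s k) := by
    intro k
    rw [hHm]
    simp [Matrix.add_apply, Matrix.smul_apply, Matrix.one_apply_eq,
      Matrix.sum_apply, Matrix.vecMulVec_apply, hεdef]
  have hoff : Hm t j i =
      ∑ s ∈ Finset.Icc 1 t, (G * Real.sqrt s)⁻¹ * (g s j * g s i) := by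
    rw [hHm]
    simp [Matrix.add_apply, Matrix.smul_apply, Matrix.one_apply_ne hji,
      Matrix.sum_apply, Matrix.vecMulVec_apply]
  set A : ℝ := ∑ s ∈ Finset.Icc 1 t, (G * Real.sqrt s)⁻¹ * (g s i * g s i) with hA
  set B : ℝ := ∑ s ∈ Finset.Icc 1 t, (G * Real.sqrt s)⁻¹ * (g s j * g s j) with hB
  set C : ℝ := ∑ s ∈ Finset.Icc 1 t, (G * Real.sqrt s)⁻¹ * (g s j * g s i) with hC
  have hcnn : ∀ s : ℕ, (0:ℝ) ≤ (G * Real.sqrt s)⁻¹ := by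
    intro s; positivity
  have hA0 : 0 ≤ A := Finset.sum_nonneg fun s _ => by
    have := hcnn s; nlinarith [mul_self_nonneg (g s i)]
  have hB0 : 0 ≤ B := Finset.sum_nonneg fun s _ => by
    have := hcnn s; nlinarith [mul_self_nonneg (g s j)]
  -- diagonal sums bounded by M
  have hdiagbound : ∀ k : Fin n,
      ∑ s ∈ Finset.Icc 1 t, (G * Real.sqrt s)⁻¹ * (g s k * g s k) ≤ M := by
    intro k
    have step1 : ∑ s ∈ Finset.Icc 1 t, (G * Real.sqrt s)⁻¹ * (g s k * g s k)
        ≤ ∑ s ∈ Finset.Icc 1 t, G * (Real.sqrt s)⁻¹ := by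
      apply Finset.sum_le_sum
      intro s hs
      obtain ⟨hs1, _⟩ := Finset.mem_Icc.mp hs
      have hss : (1:ℝ) ≤ Real.sqrt s := by
        rw [show (1:ℝ) = Real.sqrt 1 by simp]
        exact Real.sqrt_le_sqrt (by exact_mod_cast hs1)
      have hgg : g s k * g s k ≤ G ^ 2 := by
        have := hbound s k
        nlinarith [abs_nonneg (g s k), sq_abs (g s k), neg_abs_le (g s k), le_abs_self (g s k)]
      have heq : G * (Real.sqrt s)⁻¹ = (G * Real.sqrt s)⁻¹ * G ^ 2 := by
        field_simp
      rw [heq]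
      exact mul_le_mul_of_nonneg_left hgg (hcnn s)
    have step2 : ∑ s ∈ Finset.Icc 1 t, G * (Real.sqrt s)⁻¹
        = G * ∑ s ∈ Finset.Icc 1 t, (Real.sqrt s)⁻¹ := by
      rw [Finset.mul_sum]
    have step3 : G * ∑ s ∈ Finset.Icc 1 t, (Real.sqrt s)⁻¹ ≤ G * (2 * Real.sqrt t) :=
      mul_le_mul_of_nonneg_left (sum_inv_sqrt_le t) hG.le
    have step4 : G * (2 * Real.sqrt t) ≤ M := by
      rw [hMdef]
      have : Real.sqrt t ≤ Real.sqrt T := Real.sqrt_le_sqrt (by exact_mod_cast ht2)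
      nlinarith
    linarith
  have hAM : A ≤ M := hdiagbound i
  have hBM : B ≤ M := hdiagbound j
  -- Cauchy–Schwarz
  have hCS : C ^ 2 ≤ A * B := by
    have key := Finset.sum_mul_sq_le_sq_mul_sq (Finset.Icc 1 t)
      (fun s => Real.sqrt ((G * Real.sqrt s)⁻¹) * g s j)
      (fun s => Real.sqrt ((G * Real.sqrt s)⁻¹) * g s i)
    have e1 : ∀ s : ℕ, (Real.sqrt ((G * Real.sqrt s)⁻¹) * g s j) *
        (Real.sqrt ((G * Real.sqrt s)⁻¹) * g s i)
        = (G * Real.sqrt s)⁻¹ * (g s j * g s i) := by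
      intro s
      rw [show (Real.sqrt ((G * Real.sqrt s)⁻¹) * g s j) *
        (Real.sqrt ((G * Real.sqrt s)⁻¹) * g s i)
        = (Real.sqrt ((G * Real.sqrt s)⁻¹) * Real.sqrt ((G * Real.sqrt s)⁻¹)) *
          (g s j * g s i) by ring, Real.mul_self_sqrt (hcnn s)]
    have e2 : ∀ (v : ℕ → ℝ) (s : ℕ),
        (Real.sqrt ((G * Real.sqrt s)⁻¹) * v s) ^ 2
        = (G * Real.sqrt s)⁻¹ * (v s * v s) := by
      intro v s
      rw [mul_pow, Real.sq_sqrt (hcnn s)]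
      ring
    calc C ^ 2 = (∑ s ∈ Finset.Icc 1 t, (Real.sqrt ((G * Real.sqrt s)⁻¹) * g s j) *
          (Real.sqrt ((G * Real.sqrt s)⁻¹) * g s i)) ^ 2 := by
            rw [hC]; congr 1; exact Finset.sum_congr rfl fun s _ => (e1 s).symm
      _ ≤ (∑ s ∈ Finset.Icc 1 t, (Real.sqrt ((G * Real.sqrt s)⁻¹) * g s j) ^ 2) *
          (∑ s ∈ Finset.Icc 1 t, (Real.sqrt ((G * Real.sqrt s)⁻¹) * g s i) ^ 2) := key
      _ = B * A := by
            congr 1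
            · exact Finset.sum_congr rfl fun s _ => e2 (fun s' => g s' j) s
            · exact Finset.sum_congr rfl fun s _ => e2 (fun s' => g s' i) s
      _ = A * B := mul_comm _ _
  -- rewrite goal
  rw [hoff, hdiag i, hdiag j, ← hA, ← hB]
  clear_value A B C
  set D : ℝ := Real.sqrt ((ε + A) * (ε + B)) with hD
  have hD0 : 0 < D := Real.sqrt_pos.mpr (by nlinarith)
  have hDsq : D ^ 2 = (ε + A) * (ε + B) := Real.sq_sqrt (by nlinarith)
  clear_value D
  -- |C| ≤ sqrt (A*B)
  have habs : |C| ≤ Real.sqrt (A * B) := by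
    rw [← Real.sqrt_sq_eq_abs]
    exact Real.sqrt_le_sqrt hCS
  -- sqrt(A*B)/D ≤ M/(ε+M)
  have hfrac : Real.sqrt (A * B) / D ≤ M / (ε + M) := by
    rw [div_le_div_iff₀ hD0 (by linarith)]
    have hsq : (Real.sqrt (A * B) * (ε + M)) ^ 2 ≤ (M * D) ^ 2 := by
      have hAB : Real.sqrt (A * B) ^ 2 = A * B := Real.sq_sqrt (mul_nonneg hA0 hB0)
      have expand : (Real.sqrt (A * B) * (ε + M)) ^ 2 = (A * B) * (ε + M) ^ 2 := by
        rw [mul_pow, hAB]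
      have expand2 : (M * D) ^ 2 = M ^ 2 * ((ε + A) * (ε + B)) := by
        rw [mul_pow, hDsq]
      rw [expand, expand2]
      nlinarith [mul_pos hε hε, mul_pos hε hM,
        mul_nonneg (sub_nonneg.mpr hAM) hB0,
        mul_nonneg (sub_nonneg.mpr hBM) hA0,
        mul_nonneg (sub_nonneg.mpr hAM) (sub_nonneg.mpr hBM), hA0, hB0]
    have h1 : 0 ≤ Real.sqrt (A * B) * (ε + M) :=
      mul_nonneg (Real.sqrt_nonneg _) (by linarith)
    have h2 : 0 ≤ M * D := mul_nonneg hM.le hD0.le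
    calc Real.sqrt (A * B) * (ε + M)
        = Real.sqrt ((Real.sqrt (A * B) * (ε + M)) ^ 2) := (Real.sqrt_sq h1).symm
      _ ≤ Real.sqrt ((M * D) ^ 2) := Real.sqrt_le_sqrt hsq
      _ = M * D := Real.sqrt_sq h2
  have hfinal : M / (ε + M) ≤ 1 - εhat ^ 2 / 8 := by
    rw [div_le_iff₀ (by linarith)]
    rw [hεdef, hMdef]
    have h8 : (0:ℝ) ≤ 8 - εhat ^ 2 - 2 * εhat := by nlinarith
    nlinarith [mul_nonneg (mul_pos hεhat0 hP).le h8]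
  have hβ : |C| / D ≤ 1 - εhat ^ 2 / 8 := by
    calc |C| / D ≤ Real.sqrt (A * B) / D := (div_le_div_iff_of_pos_right hD0).mpr habs
      _ ≤ M / (ε + M) := hfrac
      _ ≤ 1 - εhat ^ 2 / 8 := hfinal
  have hpos8 : 0 < εhat ^ 2 / 8 := by positivity
  have hden : εhat ^ 2 / 8 ≤ 1 - |C| / D := by linarith
  rw [div_le_div_iff₀ (by linarith) (by positivity)]
  nlinarith
end
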